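/- arXiv:2312.12011 — 3 statements merged into one kernel-verified Lean document; each statement's English description precedes it below -/
import Mathlib

section
/- For all integers n ≥ 0 and k ≥ 0, the number of overpartition (2k+1)-tuples with odd parts satisfies OPT_{2k+1}(8n+6) ≡ 0 (mod 4). -/
set_option linter.unusedSectionVars false


/-- An overpartition with odd parts, encoded as a pair of multisets of odd
(hence positive) integers: the overlined parts (which are distinct, since the
last occurrence of each part size may be overlined) and the non-overlined
parts. -/
def IsOddOverpartition (p : Multiset ℕ × Multiset ℕ) : Prop :=
  p.1.Nodup ∧ (∀ x ∈ p.1, Odd x) ∧ (∀ x ∈ p.2, Odd x)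

/-- `OPT k n` is the number of overpartition `k`-tuples of `n` with odd parts,
with generating function `∏_{i≥1} ((1+q^{2i-1})/(1-q^{2i-1}))^k`. -/
noncomputable def OPT (k n : ℕ) : ℕ :=
  Set.ncard {f : Fin k → Multiset ℕ × Multiset ℕ |
    (∀ i, IsOddOverpartition (f i)) ∧ (∑ i, ((f i).1.sum + (f i).2.sum)) = n}

namespace OPTAux

abbrev OP := Multiset ℕ × Multiset ℕ

/-- the multiset of all parts (values) of an overpartition -/
def vals (p : OP) : Multiset ℕ := p.1 + p.2

/-- toggle the overline status of value `v` -/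
def toggle (v : ℕ) (p : OP) : OP :=
  if v ∈ p.1 then (p.1.erase v, v ::ₘ p.2) else (v ::ₘ p.1, p.2.erase v)

lemma vals_toggle {v : ℕ} {p : OP} (hv : v ∈ vals p) : vals (toggle v p) = vals p := by
  unfold toggle vals
  by_cases h : v ∈ p.1
  · simp only [h, if_pos]
    rw [add_comm (p.1.erase v), Multiset.cons_add, add_comm p.2, ← Multiset.cons_add,
      Multiset.cons_erase h]
  · have h2 : v ∈ p.2 := by
      rcases Multiset.mem_add.mp hv with h' | h'
      · exact absurd h' h
      · exact h'
    simp only [h, if_neg, not_false_iff]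
    rw [Multiset.cons_add, add_comm p.1, ← Multiset.cons_add, Multiset.cons_erase h2, add_comm]

lemma toggle_toggle {v : ℕ} {p : OP} (hv : v ∈ vals p) (hn : p.1.Nodup) :
    toggle v (toggle v p) = p := by
  unfold toggle
  by_cases h : v ∈ p.1
  · have hne : v ∉ p.1.erase v := hn.notMem_erase
    simp only [h, if_pos, hne, if_neg, not_false_iff]
    rw [Multiset.cons_erase h, Multiset.erase_cons_head]
  · have h2 : v ∈ p.2 := by
      rcases Multiset.mem_add.mp hv with h' | h'
      · exact absurd h' h
      · exact h'
    simp only [h, if_neg, not_false_iff, Multiset.mem_cons_self, if_pos]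
    rw [Multiset.erase_cons_head, Multiset.cons_erase h2]

lemma isOdd_toggle {v : ℕ} {p : OP} (hv : v ∈ vals p) (h : IsOddOverpartition p) :
    IsOddOverpartition (toggle v p) := by
  obtain ⟨hn, ho1, ho2⟩ := h
  have hvo : Odd v := by
    rcases Multiset.mem_add.mp hv with h' | h'
    · exact ho1 v h'
    · exact ho2 v h'
  unfold toggle
  by_cases hm : v ∈ p.1
  · simp only [hm, if_pos]
    refine ⟨hn.erase v, fun x hx => ho1 x (Multiset.mem_of_mem_erase hx), fun x hx => ?_⟩
    rcases Multiset.mem_cons.mp hx with rfl | hx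
    · exact hvo
    · exact ho2 x hx
  · simp only [hm, if_neg, not_false_iff]
    refine ⟨Multiset.nodup_cons.mpr ⟨hm, hn⟩, fun x hx => ?_,
      fun x hx => ho2 x (Multiset.mem_of_mem_erase hx)⟩
    rcases Multiset.mem_cons.mp hx with rfl | hx
    · exact hvo
    · exact ho1 x hx

lemma mem_fst_toggle {v : ℕ} {p : OP} (hn : p.1.Nodup) :
    (v ∈ (toggle v p).1 ↔ v ∉ p.1) := by
  unfold toggle
  by_cases h : v ∈ p.1
  · simp [h, hn.notMem_erase]
  · simp [h]

lemma mem_fst_toggle_ne {v w : ℕ} {p : OP} (hw : w ≠ v) :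
    (w ∈ (toggle v p).1 ↔ w ∈ p.1) := by
  unfold toggle
  by_cases h : v ∈ p.1
  · simp only [h, if_pos]
    exact Multiset.mem_erase_of_ne hw
  · simp only [h, if_neg, not_false_iff, Multiset.mem_cons]
    constructor
    · rintro (rfl | hx)
      · exact absurd rfl hw
      · exact hx
    · exact Or.inr


section Helpers

variable {α : Type*} [LinearOrder α] {s : Finset α} {d b : α}

lemma min_getD_mem (hs : s.Nonempty) : s.min.getD d ∈ s := by
  rw [← Finset.coe_min' hs]; exact s.min'_mem hs

lemma min_getD_le (hb : b ∈ s) : s.min.getD d ≤ b := by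
  rw [← Finset.coe_min' ⟨b, hb⟩]; exact s.min'_le b hb

lemma max_getD_mem (hs : s.Nonempty) : s.max.getD d ∈ s := by
  rw [← Finset.coe_max' hs]; exact s.max'_mem hs

lemma le_max_getD (hb : b ∈ s) : b ≤ s.max.getD d := by
  rw [← Finset.coe_max' ⟨b, hb⟩]; exact s.le_max' b hb

end Helpers


variable {K : ℕ} [NeZero K]

noncomputable instance : Inhabited (Fin K) := ⟨⟨0, Nat.pos_of_ne_zero (NeZero.ne K)⟩⟩

/-- all parts of a tuple -/
def allVals (f : Fin K → OP) : Multiset ℕ := ∑ i, vals (f i)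

/-- minimal part value -/
noncomputable def mval (f : Fin K → OP) : ℕ := (allVals f).toFinset.min.getD 0

/-- maximal part value -/
noncomputable def Mval (f : Fin K → OP) : ℕ := (allVals f).toFinset.max.getD 0

/-- least coordinate containing the minimal value -/
noncomputable def iMin (f : Fin K → OP) : Fin K :=
  (Finset.univ.filter (fun i => mval f ∈ vals (f i))).min.getD default

/-- greatest coordinate containing the maximal value -/
noncomputable def iMax (f : Fin K → OP) : Fin K :=
  (Finset.univ.filter (fun i => Mval f ∈ vals (f i))).max.getD default

variable {f g : Fin K → OP}

omit [NeZero K] in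
lemma allVals_congr (h : ∀ i, vals (g i) = vals (f i)) : allVals g = allVals f :=
  Finset.sum_congr rfl (fun i _ => h i)

omit [NeZero K] in
lemma mval_congr (h : ∀ i, vals (g i) = vals (f i)) : mval g = mval f := by
  unfold mval; rw [allVals_congr h]

omit [NeZero K] in
lemma Mval_congr (h : ∀ i, vals (g i) = vals (f i)) : Mval g = Mval f := by
  unfold Mval; rw [allVals_congr h]

lemma iMin_congr (h : ∀ i, vals (g i) = vals (f i)) : iMin g = iMin f := by
  unfold iMin
  rw [mval_congr h]
  congr 2
  exact Finset.filter_congr (fun i _ => by rw [h i])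

lemma iMax_congr (h : ∀ i, vals (g i) = vals (f i)) : iMax g = iMax f := by
  unfold iMax
  rw [Mval_congr h]
  congr 2
  exact Finset.filter_congr (fun i _ => by rw [h i])

omit [NeZero K] in
lemma mem_allVals {a : ℕ} : a ∈ allVals f ↔ ∃ i, a ∈ vals (f i) := by
  unfold allVals
  rw [Multiset.mem_sum]
  simp

omit [NeZero K] in
lemma mval_mem (hne : allVals f ≠ 0) : mval f ∈ allVals f := by
  have := min_getD_mem (d := 0) (Multiset.toFinset_nonempty.mpr hne)
  rwa [Multiset.mem_toFinset] at this

omit [NeZero K] in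
lemma Mval_mem (hne : allVals f ≠ 0) : Mval f ∈ allVals f := by
  have := max_getD_mem (d := 0) (Multiset.toFinset_nonempty.mpr hne)
  rwa [Multiset.mem_toFinset] at this

omit [NeZero K] in
lemma mval_le {a : ℕ} (ha : a ∈ allVals f) : mval f ≤ a :=
  min_getD_le (Multiset.mem_toFinset.mpr ha)

omit [NeZero K] in
lemma le_Mval {a : ℕ} (ha : a ∈ allVals f) : a ≤ Mval f :=
  le_max_getD (Multiset.mem_toFinset.mpr ha)

lemma mval_mem_iMin (hne : allVals f ≠ 0) : mval f ∈ vals (f (iMin f)) := by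
  obtain ⟨i, hi⟩ := mem_allVals.mp (mval_mem hne)
  have hmem := min_getD_mem (d := (default : Fin K))
    (⟨i, Finset.mem_filter.mpr ⟨Finset.mem_univ i, hi⟩⟩ :
      (Finset.univ.filter (fun i => mval f ∈ vals (f i))).Nonempty)
  exact (Finset.mem_filter.mp hmem).2

lemma Mval_mem_iMax (hne : allVals f ≠ 0) : Mval f ∈ vals (f (iMax f)) := by
  obtain ⟨i, hi⟩ := mem_allVals.mp (Mval_mem hne)
  have hmem := max_getD_mem (d := (default : Fin K))
    (⟨i, Finset.mem_filter.mpr ⟨Finset.mem_univ i, hi⟩⟩ :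
      (Finset.univ.filter (fun i => Mval f ∈ vals (f i))).Nonempty)
  exact (Finset.mem_filter.mp hmem).2

lemma iMin_le {i : Fin K} (hi : mval f ∈ vals (f i)) : iMin f ≤ i :=
  min_getD_le (Finset.mem_filter.mpr ⟨Finset.mem_univ i, hi⟩)

lemma le_iMax {i : Fin K} (hi : Mval f ∈ vals (f i)) : i ≤ iMax f :=
  le_max_getD (Finset.mem_filter.mpr ⟨Finset.mem_univ i, hi⟩)


/-! ### The counting condition and finiteness -/

def Cond (N : ℕ) (f : Fin K → OP) : Prop :=
  (∀ i, IsOddOverpartition (f i)) ∧ (∑ i, ((f i).1.sum + (f i).2.sum)) = N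

omit [NeZero K] in
lemma sum_vals_eq (f : Fin K → OP) :
    (∑ i, ((f i).1.sum + (f i).2.sum)) = (allVals f).sum := by
  unfold allVals
  have h1 : (∑ i, vals (f i)).sum = ∑ i, (vals (f i)).sum :=
    map_sum (⟨⟨Multiset.sum, Multiset.sum_zero⟩, fun s t => Multiset.sum_add s t⟩ :
      Multiset ℕ →+ ℕ) (fun i => vals (f i)) Finset.univ
  rw [h1]
  exact Finset.sum_congr rfl fun i _ => (Multiset.sum_add (f i).1 (f i).2).symm

omit [NeZero K] in
lemma card_le_sum_multiset {x : Multiset ℕ} (h : ∀ a ∈ x, 1 ≤ a) :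
    Multiset.card x ≤ x.sum := by
  induction x using Multiset.induction with
  | empty => simp
  | cons a s ih =>
    simp only [Multiset.card_cons, Multiset.sum_cons]
    have := h a (Multiset.mem_cons_self a s)
    have := ih (fun x hx => h x (Multiset.mem_cons_of_mem hx))
    omega

omit [NeZero K] in
lemma le_big {N : ℕ} {x : Multiset ℕ} (h1 : ∀ a ∈ x, 1 ≤ a) (h2 : x.sum ≤ N) :
    x ≤ N • (Finset.range (N+1)).val := by
  rw [Multiset.le_iff_count]
  intro a
  by_cases ha : a ∈ x
  · have haN : a ≤ N :=
      le_trans (Multiset.single_le_sum (fun _ _ => Nat.zero_le _) a ha) h2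
    have hcard : x.count a ≤ N :=
      le_trans (Multiset.count_le_card a x) (le_trans (card_le_sum_multiset h1) h2)
    have hmem : a ∈ (Finset.range (N+1)).val := by
      rw [Finset.mem_val, Finset.mem_range]; omega
    rw [Multiset.count_nsmul]
    have h1c : 1 ≤ (Finset.range (N+1)).val.count a :=
      Multiset.one_le_count_iff_mem.mpr hmem
    calc x.count a ≤ N * 1 := by omega
      _ ≤ N * (Finset.range (N+1)).val.count a := Nat.mul_le_mul_left N h1c
  · simp [Multiset.count_eq_zero_of_notMem ha]

omit [NeZero K] in
lemma cond_finite (K N : ℕ) : {f : Fin K → OP | Cond N f}.Finite := by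
  classical
  set big : Multiset ℕ := N • (Finset.range (N+1)).val with hbig
  set B : Set (Multiset ℕ) := {x | x ≤ big} with hB
  have hBfin : B.Finite := by
    have : B = ↑(big.powerset.toFinset) := by
      ext x
      simp [hB, Multiset.mem_powerset]
    rw [this]
    exact (big.powerset.toFinset).finite_toSet
  have hsub : {f : Fin K → OP | Cond N f} ⊆ Set.univ.pi (fun _ : Fin K => B ×ˢ B) := by
    intro f hf
    obtain ⟨hodd, hsum⟩ := hf
    intro i _
    have hterm : (f i).1.sum + (f i).2.sum ≤ N := by
      rw [← hsum]
      exact Finset.single_le_sum (f := fun j => (f j).1.sum + (f j).2.sum)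
        (fun j _ => Nat.zero_le _) (Finset.mem_univ i)
    have hone : ∀ x : ℕ, Odd x → 1 ≤ x := by
      rintro x ⟨m, rfl⟩; omega
    constructor
    · exact le_big (fun a ha => hone a ((hodd i).2.1 a ha)) (by omega)
    · exact le_big (fun a ha => hone a ((hodd i).2.2 a ha)) (by omega)
  exact Set.Finite.subset (Set.Finite.pi (fun _ => hBfin.prod hBfin)) hsub

/-! ### Toggling a value at a coordinate -/

def tog (v : ℕ) (j : Fin K) (f : Fin K → OP) : Fin K → OP :=
  Function.update f j (toggle v (f j))

omit [NeZero K] in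
lemma vals_tog {v : ℕ} {j : Fin K} {f : Fin K → OP} (hv : v ∈ vals (f j)) :
    ∀ i, vals (tog v j f i) = vals (f i) := by
  intro i
  unfold tog
  by_cases hij : i = j
  · subst hij
    rw [Function.update_self]
    exact vals_toggle hv
  · rw [Function.update_of_ne hij]

omit [NeZero K] in
lemma cond_tog {N : ℕ} {v : ℕ} {j : Fin K} {f : Fin K → OP}
    (hC : Cond N f) (hv : v ∈ vals (f j)) : Cond N (tog v j f) := by
  obtain ⟨hodd, hsum⟩ := hC
  constructor
  · intro i
    unfold tog
    by_cases hij : i = j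
    · subst hij
      rw [Function.update_self]
      exact isOdd_toggle hv (hodd _)
    · rw [Function.update_of_ne hij]
      exact hodd i
  · rw [sum_vals_eq, allVals_congr (vals_tog hv), ← sum_vals_eq]
    exact hsum

omit [NeZero K] in
lemma tog_tog {v : ℕ} {j : Fin K} {f : Fin K → OP} (hv : v ∈ vals (f j))
    (hn : (f j).1.Nodup) : tog v j (tog v j f) = f := by
  unfold tog
  rw [Function.update_self, Function.update_idem, toggle_toggle hv hn,
    Function.update_eq_self]

omit [NeZero K] in
lemma allVals_ne {N : ℕ} {f : Fin K → OP} (hC : Cond N f) (hN : N ≠ 0) :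
    allVals f ≠ 0 := by
  intro h
  apply hN
  rw [← hC.2, sum_vals_eq, h, Multiset.sum_zero]


/-! ### Normal form: a single constant column -/

/-- the tuple with one coordinate `i` being `c` non-overlined copies of `v` -/
def col (i : Fin K) (c v : ℕ) : Fin K → OP :=
  Function.update (fun _ => ((0 : Multiset ℕ), (0 : Multiset ℕ))) i (0, Multiset.replicate c v)

omit [NeZero K] in
lemma vals_col {i j : Fin K} {c v : ℕ} :
    vals (col i c v j) = if j = i then Multiset.replicate c v else 0 := by
  unfold col vals
  by_cases hj : j = i
  · subst hj; rw [Function.update_self, if_pos rfl]; simp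
  · rw [Function.update_of_ne hj, if_neg hj]; simp

omit [NeZero K] in
lemma allVals_col {i : Fin K} {c v : ℕ} : allVals (col i c v) = Multiset.replicate c v := by
  unfold allVals
  rw [Finset.sum_eq_single_of_mem i (Finset.mem_univ i)]
  · rw [vals_col, if_pos rfl]
  · intro j _ hj
    rw [vals_col, if_neg hj]

lemma mval_col {i : Fin K} {c v : ℕ} (hc : c ≠ 0) : mval (col i c v) = v := by
  unfold mval
  rw [allVals_col, Multiset.toFinset_replicate, if_neg hc, Finset.min_singleton]
  rfl

lemma Mval_col {i : Fin K} {c v : ℕ} (hc : c ≠ 0) : Mval (col i c v) = v := by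
  unfold Mval
  rw [allVals_col, Multiset.toFinset_replicate, if_neg hc, Finset.max_singleton]
  rfl

lemma iMin_col {i : Fin K} {c v : ℕ} (hc : c ≠ 0) : iMin (col i c v) = i := by
  unfold iMin
  rw [mval_col hc]
  have : (Finset.univ.filter (fun j => v ∈ vals (col i c v j))) = {i} := by
    ext j
    simp only [Finset.mem_filter, Finset.mem_univ, true_and, Finset.mem_singleton, vals_col]
    by_cases hj : j = i
    · subst hj
      simp [Multiset.mem_replicate, hc]
    · simp [hj]
  rw [this, Finset.min_singleton]
  rfl

lemma iMax_col {i : Fin K} {c v : ℕ} (hc : c ≠ 0) : iMax (col i c v) = i := by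
  unfold iMax
  rw [Mval_col hc]
  have : (Finset.univ.filter (fun j => v ∈ vals (col i c v j))) = {i} := by
    ext j
    simp only [Finset.mem_filter, Finset.mem_univ, true_and, Finset.mem_singleton, vals_col]
    by_cases hj : j = i
    · subst hj
      simp [Multiset.mem_replicate, hc]
    · simp [hj]
  rw [this, Finset.max_singleton]
  rfl

omit [NeZero K] in
lemma cond_col {i : Fin K} {c v : ℕ} (hv : Odd v) : Cond (c * v) (col i c v) := by
  constructor
  · intro j
    unfold col
    by_cases hj : j = i
    · subst hj
      rw [Function.update_self]
      exact ⟨Multiset.nodup_zero, by simp, fun x hx => by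
        rw [Multiset.eq_of_mem_replicate hx]; exact hv⟩
    · rw [Function.update_of_ne hj]
      exact ⟨Multiset.nodup_zero, by simp, by simp⟩
  · rw [sum_vals_eq, allVals_col, Multiset.sum_replicate, smul_eq_mul]

omit [NeZero K] in
lemma fst_col {i j : Fin K} {c v : ℕ} : (col i c v j).1 = 0 := by
  unfold col
  by_cases hj : j = i
  · subst hj; rw [Function.update_self]
  · rw [Function.update_of_ne hj]


/-! ### Structure of exceptional elements -/

lemma exc_struct {N : ℕ} (hN : N ≠ 0) {f : Fin K → OP} (hC : Cond N f)
    (hb : mval f ∉ (f (iMin f)).1) (h1 : mval f = Mval f) (h2 : iMin f = iMax f) :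
    f = col (iMax f) (Multiset.card (allVals f)) (mval f) ∧
      Multiset.card (allVals f) * mval f = N := by
  set v := mval f with hv
  set i := iMax f with hi
  have hne := allVals_ne hC hN
  have hall : ∀ x ∈ allVals f, x = v := fun x hx =>
    le_antisymm (h1 ▸ le_Mval hx) (mval_le hx)
  have hcoord : ∀ j, j ≠ i → vals (f j) = 0 := by
    intro j hj
    rw [Multiset.eq_zero_iff_forall_notMem]
    intro x hx
    have hxv : x = v := hall x (mem_allVals.mpr ⟨j, hx⟩)
    rw [hxv] at hx
    have hle : j ≤ i := le_iMax (h1 ▸ hx)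
    have hge : i ≤ j := h2 ▸ iMin_le hx
    exact hj (le_antisymm hle hge)
  have hvi : v ∈ vals (f i) := by
    have := mval_mem_iMin hne
    rwa [h2] at this
  have hval_i : ∀ x ∈ vals (f i), x = v := fun x hx => hall x (mem_allVals.mpr ⟨i, hx⟩)
  have hfst : (f i).1 = 0 := by
    rw [Multiset.eq_zero_iff_forall_notMem]
    intro x hx
    have hxv : x = v := hval_i x (Multiset.mem_add.mpr (Or.inl hx))
    rw [hxv] at hx
    exact hb (h2 ▸ hx)
  have hallv : allVals f = vals (f i) := by
    unfold allVals
    rw [Finset.sum_eq_single_of_mem i (Finset.mem_univ i) (fun j _ hj => hcoord j hj)]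
  have hsnd : vals (f i) = (f i).2 := by
    unfold vals
    rw [hfst, zero_add]
  have hrep : vals (f i) = Multiset.replicate (Multiset.card (vals (f i))) v :=
    Multiset.eq_replicate_card.mpr hval_i
  have hcardeq : Multiset.card (allVals f) = Multiset.card (vals (f i)) := by rw [hallv]
  constructor
  · funext j
    by_cases hj : j = i
    · subst hj
      show f i = col i (Multiset.card (allVals f)) v i
      unfold col
      rw [Function.update_self]
      apply Prod.ext
      · exact hfst
      · rw [hcardeq]
        show (f i).2 = Multiset.replicate (Multiset.card (vals (f i))) v
        rw [← hsnd, ← hrep, hsnd]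
    · have h0 : vals (f j) = 0 := hcoord j hj
      have hj1 : (f j).1 = 0 := by
        have : (f j).1 ≤ vals (f j) := Multiset.le_add_right _ _
        rw [h0] at this
        exact Multiset.le_zero.mp this
      have hj2 : (f j).2 = 0 := by
        have : (f j).2 ≤ vals (f j) := Multiset.le_add_left _ _
        rw [h0] at this
        exact Multiset.le_zero.mp this
      show f j = col i (Multiset.card (allVals f)) v j
      unfold col
      rw [Function.update_of_ne hj]
      exact Prod.ext hj1 hj2
  · have := hC.2
    rw [sum_vals_eq, hallv, hrep] at this
    rw [hcardeq]
    rw [Multiset.sum_replicate, smul_eq_mul] at this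
    rw [← Multiset.card_replicate (Multiset.card (vals (f i))) v, ← hrep]
    rw [hrep, Multiset.card_replicate]
    exact this


/-! ### The main counting argument -/

noncomputable def FF (K N : ℕ) : Finset (Fin K → OP) := (cond_finite K N).toFinset

omit [NeZero K] in
lemma mem_FF {N : ℕ} {f : Fin K → OP} : f ∈ FF K N ↔ Cond N f :=
  Set.Finite.mem_toFinset _

omit [NeZero K] in
lemma odd_of_mem_allVals {N : ℕ} {f : Fin K → OP} (hC : Cond N f) {x : ℕ}
    (hx : x ∈ allVals f) : Odd x := by
  obtain ⟨j, hj⟩ := mem_allVals.mp hx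
  rcases Multiset.mem_add.mp hj with h | h
  · exact (hC.1 j).2.1 x h
  · exact (hC.1 j).2.2 x h

theorem four_dvd_card (n : ℕ) (K : ℕ) [NeZero K] : 4 ∣ (FF K (8 * n + 6)).card := by
  classical
  set N := 8 * n + 6 with hNdef
  have hN0 : N ≠ 0 := by omega
  set p : (Fin K → OP) → Prop := fun f => mval f ∈ (f (iMin f)).1 with hp
  set F : Finset (Fin K → OP) := FF K N with hFdef
  set F₀ := F.filter (fun f => ¬ p f) with hF0
  set F₁ := F.filter (fun f => p f) with hF1
  have hsplit : F₁.card + F₀.card = F.card :=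
    Finset.card_filter_add_card_filter_not (fun f => p f)
  -- the involution toggling the overline of the minimal part
  set σ : (Fin K → OP) → (Fin K → OP) := fun f => tog (mval f) (iMin f) f with hσdef
  have hσ : ∀ f, Cond N f →
      Cond N (σ f) ∧ (p (σ f) ↔ ¬ p f) ∧ σ (σ f) = f := by
    intro f hC
    have hne : allVals f ≠ 0 := allVals_ne hC hN0
    have hmm : mval f ∈ vals (f (iMin f)) := mval_mem_iMin hne
    have hnd : (f (iMin f)).1.Nodup := (hC.1 (iMin f)).1
    have hvalsσ : ∀ i, vals (σ f i) = vals (f i) := vals_tog hmm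
    have hCσ : Cond N (σ f) := cond_tog hC hmm
    have hmσ : mval (σ f) = mval f := mval_congr hvalsσ
    have hiσ : iMin (σ f) = iMin f := iMin_congr hvalsσ
    have hupd : (σ f) (iMin f) = toggle (mval f) (f (iMin f)) := Function.update_self _ _ _
    refine ⟨hCσ, ?_, ?_⟩
    · rw [hp]
      simp only [hmσ, hiσ, hupd]
      exact mem_fst_toggle hnd
    · show tog (mval (σ f)) (iMin (σ f)) (σ f) = f
      rw [hmσ, hiσ]
      exact tog_tog hmm hnd
  have hbij : F₀.card = F₁.card := by
    apply Finset.card_bij' (fun f _ => σ f) (fun f _ => σ f)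
    · intro a ha
      rw [hF0, Finset.mem_filter] at ha
      obtain ⟨haF, hap⟩ := ha
      obtain ⟨h1, h2, _⟩ := hσ a (mem_FF.mp haF)
      rw [hF1, Finset.mem_filter]
      exact ⟨mem_FF.mpr h1, by tauto⟩
    · intro a ha
      rw [hF1, Finset.mem_filter] at ha
      obtain ⟨haF, hap⟩ := ha
      obtain ⟨h1, h2, _⟩ := hσ a (mem_FF.mp haF)
      rw [hF0, Finset.mem_filter]
      exact ⟨mem_FF.mpr h1, by tauto⟩
    · intro a ha
      rw [hF0, Finset.mem_filter] at ha
      exact (hσ a (mem_FF.mp ha.1)).2.2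
    · intro a ha
      rw [hF1, Finset.mem_filter] at ha
      exact (hσ a (mem_FF.mp ha.1)).2.2
  -- the exceptional elements and the two pairings on F₀
  set O := 4 * n + 3 with hOdef
  set Exc : (Fin K → OP) → Prop := fun f => mval f = Mval f ∧ iMin f = iMax f with hExcdef
  set τ : (Fin K → OP) → (Fin K → OP) := fun f => tog (Mval f) (iMax f) f with hτdef
  set ρ : (Fin K → OP) → (Fin K → OP) :=
    fun f => col (iMax f) (2 * mval f) (O / mval f) with hρdef
  -- facts about τ on non-exceptional elements of F₀
  have hτfacts : ∀ f, Cond N f → ¬ p f → ¬ Exc f →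
      (Cond N (τ f) ∧ ¬ p (τ f)) ∧ ¬ Exc (τ f) ∧ τ (τ f) = f ∧ τ f ≠ f := by
    intro f hC hnp hnE
    have hne : allVals f ≠ 0 := allVals_ne hC hN0
    have hMm : Mval f ∈ vals (f (iMax f)) := Mval_mem_iMax hne
    have hndM : (f (iMax f)).1.Nodup := (hC.1 (iMax f)).1
    have hvalsτ : ∀ i, vals (τ f i) = vals (f i) := vals_tog hMm
    have hCτ : Cond N (τ f) := cond_tog hC hMm
    have hmτ : mval (τ f) = mval f := mval_congr hvalsτ
    have hMτ : Mval (τ f) = Mval f := Mval_congr hvalsτ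
    have hiτ : iMin (τ f) = iMin f := iMin_congr hvalsτ
    have hIτ : iMax (τ f) = iMax f := iMax_congr hvalsτ
    refine ⟨⟨hCτ, ?_⟩, ?_, ?_, ?_⟩
    · rw [hp]
      simp only [hmτ, hiτ]
      by_cases h12 : iMin f = iMax f
      · have hmM : mval f ≠ Mval f := fun h => hnE ⟨h, h12⟩
        have : (τ f) (iMin f) = toggle (Mval f) (f (iMin f)) := by
          rw [h12]
          exact Function.update_self _ _ _
        rw [this, mem_fst_toggle_ne hmM]
        exact hnp
      · have : (τ f) (iMin f) = f (iMin f) := Function.update_of_ne h12 _ _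
        rw [this]
        exact hnp
    · rw [hExcdef]
      simp only [hmτ, hMτ, hiτ, hIτ]
      exact hnE
    · show tog (Mval (τ f)) (iMax (τ f)) (τ f) = f
      rw [hMτ, hIτ]
      exact tog_tog hMm hndM
    · intro h
      have hflip : Mval f ∈ ((τ f) (iMax f)).1 ↔ Mval f ∉ (f (iMax f)).1 := by
        have : (τ f) (iMax f) = toggle (Mval f) (f (iMax f)) := Function.update_self _ _ _
        rw [this]
        exact mem_fst_toggle hndM
      rw [h] at hflip
      tauto
  -- facts about ρ on exceptional elements of F₀
  have hρfacts : ∀ f, Cond N f → ¬ p f → Exc f →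
      (Cond N (ρ f) ∧ ¬ p (ρ f)) ∧ Exc (ρ f) ∧ ρ (ρ f) = f ∧ ρ f ≠ f := by
    intro f hC hnp hE
    have hne : allVals f ≠ 0 := allVals_ne hC hN0
    obtain ⟨hcol, hcv⟩ := exc_struct hN0 hC hnp hE.1 hE.2
    set v := mval f with hvdef
    set i := iMax f with hidef
    set c := Multiset.card (allVals f) with hcdef
    have hvodd : Odd v := odd_of_mem_allVals hC (mval_mem hne)
    have hv1 : 1 ≤ v := by
      obtain ⟨s, hs⟩ := hvodd
      omega
    have hc0 : c ≠ 0 := by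
      intro h
      rw [h, zero_mul] at hcv
      exact hN0 hcv.symm
    -- c is even, c = 2 * t with t * v = O
    have hceven : Even c := by
      by_contra hodd
      rw [Nat.not_even_iff_odd] at hodd
      have : Odd (c * v) := Nat.odd_mul.mpr ⟨hodd, hvodd⟩
      rw [hcv] at this
      obtain ⟨s, hs⟩ := this
      omega
    obtain ⟨t, ht⟩ := hceven
    have hct : c = 2 * t := by omega
    have htv : t * v = O := by
      have h1 : 2 * t * v = N := by rw [← hct]; exact hcv
      have h2 : 2 * (t * v) = 2 * t * v := by ring
      omega
    have ht0 : t ≠ 0 := by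
      intro h
      rw [h, zero_mul] at htv
      omega
    have htodd : Odd t := by
      have hOodd : Odd O := ⟨2 * n + 1, by omega⟩
      rw [← htv] at hOodd
      exact (Nat.odd_mul.mp hOodd).1
    have hOv : O / v = t := by
      rw [← htv, Nat.mul_div_cancel _ (by omega : 0 < v)]
    have hρf : ρ f = col i (2 * v) t := by
      rw [hρdef]
      simp only
      rw [hOv]
    have h2v0 : 2 * v ≠ 0 := by omega
    have hcondρ : Cond N (ρ f) := by
      rw [hρf]
      have := cond_col (K := K) (i := i) (c := 2 * v) htodd
      have heq : 2 * v * t = N := by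
        have h2 : 2 * v * t = 2 * (t * v) := by ring
        omega
      rwa [heq] at this
    have hmρ : mval (ρ f) = t := by rw [hρf]; exact mval_col h2v0
    have hMρ : Mval (ρ f) = t := by rw [hρf]; exact Mval_col h2v0
    have hiρ : iMin (ρ f) = i := by rw [hρf]; exact iMin_col h2v0
    have hIρ : iMax (ρ f) = i := by rw [hρf]; exact iMax_col h2v0
    refine ⟨⟨hcondρ, ?_⟩, ⟨by rw [hmρ, hMρ], by rw [hiρ, hIρ]⟩, ?_, ?_⟩
    · rw [hp]
      intro hmem
      rw [hiρ] at hmem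
      have : ((ρ f) i).1 = 0 := by rw [hρf]; exact fst_col
      rw [this] at hmem
      exact Multiset.notMem_zero _ hmem
    · -- ρ (ρ f) = f
      have hOt : O / t = v := by
        rw [← htv, Nat.mul_div_cancel_left _ (by omega : 0 < t)]
      have : ρ (ρ f) = col i (2 * t) v := by
        rw [hρdef]
        simp only
        rw [hmρ, hIρ, hOt]
      rw [this, ← hct, ← hcol]
    · -- ρ f ≠ f
      intro h
      have hfi : f i = (0, Multiset.replicate c v) := by
        rw [hcol]
        show col i c v i = _
        unfold col
        rw [Function.update_self]
      have hρfi : (ρ f) i = (0, Multiset.replicate (2 * v) t) := by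
        rw [hρf]
        show col i (2 * v) t i = _
        unfold col
        rw [Function.update_self]
      rw [h, hfi] at hρfi
      have hrepl : Multiset.replicate c v = Multiset.replicate (2 * v) t :=
        congrArg Prod.snd hρfi
      have hvt : v = t := by
        have hvin : v ∈ Multiset.replicate (2 * v) t := by
          rw [← hrepl]
          exact Multiset.mem_replicate.mpr ⟨hc0, rfl⟩
        exact Multiset.eq_of_mem_replicate hvin
      obtain ⟨s, hs⟩ := hvodd
      have hsq : v * v = O := by rw [hvt] at htv ⊢; exact htv
      have hexp : (2 * s + 1) * (2 * s + 1) = 4 * (s * s) + 4 * s + 1 := by ring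
      rw [hs] at hsq
      omega
  -- F₀ has even cardinality
  have heven : 2 ∣ F₀.card := by
    have hsum : ∑ _x ∈ F₀, (1 : ZMod 2) = 0 := by
      apply Finset.sum_involution (fun a _ => if Exc a then ρ a else τ a)
      · intro a _
        decide
      · intro a ha _
        rw [hF0, Finset.mem_filter] at ha
        have hC := mem_FF.mp ha.1
        by_cases hE : Exc a
        · rw [if_pos hE]
          exact (hρfacts a hC ha.2 hE).2.2.2
        · rw [if_neg hE]
          exact (hτfacts a hC ha.2 hE).2.2.2
      · intro a ha
        rw [hF0, Finset.mem_filter] at ha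
        have hC := mem_FF.mp ha.1
        by_cases hE : Exc a
        · rw [if_pos hE, hF0, Finset.mem_filter]
          obtain ⟨⟨h1, h2⟩, _, _, _⟩ := hρfacts a hC ha.2 hE
          exact ⟨mem_FF.mpr h1, h2⟩
        · rw [if_neg hE, hF0, Finset.mem_filter]
          obtain ⟨⟨h1, h2⟩, _, _, _⟩ := hτfacts a hC ha.2 hE
          exact ⟨mem_FF.mpr h1, h2⟩
      · intro a ha
        rw [hF0, Finset.mem_filter] at ha
        have hC := mem_FF.mp ha.1
        by_cases hE : Exc a
        · obtain ⟨⟨h1, h2⟩, hE', hinv, _⟩ := hρfacts a hC ha.2 hE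
          simp only [if_pos hE, if_pos hE']
          exact hinv
        · obtain ⟨⟨h1, h2⟩, hE', hinv, _⟩ := hτfacts a hC ha.2 hE
          simp only [if_neg hE, if_neg hE']
          exact hinv
    rw [Finset.sum_const, nsmul_eq_mul, mul_one] at hsum
    exact (ZMod.natCast_eq_zero_iff _ 2).mp hsum
  omega

end OPTAux

/-- For all `n ≥ 0` and `k ≥ 0`, `OPT_{2k+1}(8n+6) ≡ 0 (mod 4)`. -/
theorem opt_odd_tuple_8n_plus_6 (n k : ℕ) :
    OPT (2 * k + 1) (8 * n + 6) ≡ 0 [MOD 4] := by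
  haveI : NeZero (2 * k + 1) := ⟨by omega⟩
  rw [Nat.modEq_zero_iff_dvd]
  have h1 : OPT (2 * k + 1) (8 * n + 6) = (OPTAux.FF (2 * k + 1) (8 * n + 6)).card := by
    unfold OPT
    rw [show {f : Fin (2 * k + 1) → Multiset ℕ × Multiset ℕ |
        (∀ i, IsOddOverpartition (f i)) ∧ (∑ i, ((f i).1.sum + (f i).2.sum)) = 8 * n + 6}
        = {f : Fin (2 * k + 1) → OPTAux.OP | OPTAux.Cond (8 * n + 6) f} from rfl]
    rw [Set.ncard_eq_toFinset_card _ (OPTAux.cond_finite _ _)]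
    rfl
  rw [h1]
  exact OPTAux.four_dvd_card n _
end

section
/- Let p ≥ 3 be a prime. Then for all integers n ≥ 0, α ≥ 0, δ ≥ 0, k ≥ 1, and every t ∈ {1, 2, …, p−1}, the number of overpartition (2k+1)-tuples with odd parts satisfies OPT_{2k+1}(2·3^{2α}·p^{2δ+1}(pn+t) + 3^{2α}·p^{2(δ+1)}) ≡ 0 (mod 4). -/
namespace OptProof

abbrev OP := Multiset ℕ × Multiset ℕ

def parts (P : OP) : Multiset ℕ := P.1 + P.2

noncomputable def toggle (P : OP) (v : ℕ) : OP :=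
  if v ∈ P.1 then (P.1.erase v, v ::ₘ P.2) else (v ::ₘ P.1, P.2.erase v)

variable {P : OP} {v w : ℕ}

lemma mem_parts : w ∈ parts P ↔ w ∈ P.1 ∨ w ∈ P.2 := Multiset.mem_add

lemma parts_toggle (hv : v ∈ parts P) : parts (toggle P v) = parts P := by
  by_cases h : v ∈ P.1
  · simp only [toggle, if_pos h, parts]
    rw [Multiset.add_cons, ← Multiset.cons_add, Multiset.cons_erase h]
  · have hv2 : v ∈ P.2 := (mem_parts.mp hv).resolve_left h
    simp only [toggle, if_neg h, parts]
    rw [Multiset.cons_add, ← Multiset.add_cons, Multiset.cons_erase hv2]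

lemma toggle_fst_nodup (hnd : P.1.Nodup) : (toggle P v).1.Nodup := by
  by_cases h : v ∈ P.1
  · simp only [toggle, if_pos h]; exact hnd.erase v
  · simp only [toggle, if_neg h]; exact hnd.cons h

lemma isOdd_toggle (hv : v ∈ parts P) (hP : IsOddOverpartition P) :
    IsOddOverpartition (toggle P v) := by
  obtain ⟨hnd, h1, h2⟩ := hP
  have hodd : ∀ x ∈ parts P, Odd x := by
    intro x hx; rcases mem_parts.mp hx with h | h; exacts [h1 x h, h2 x h]
  refine ⟨toggle_fst_nodup hnd, ?_, ?_⟩ <;> intro x hx <;>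
    refine hodd x ?_ <;> rw [← parts_toggle hv] <;> exact mem_parts.mpr (by tauto)

lemma mem_toggle_fst (hv : v ∈ parts P) (hnd : P.1.Nodup) :
    v ∈ (toggle P v).1 ↔ v ∉ P.1 := by
  by_cases h : v ∈ P.1
  · have hne : v ∉ P.1.erase v := hnd.notMem_erase
    rw [toggle, if_pos h]
    simpa [hne] using h
  · rw [toggle, if_neg h]
    simpa using h
lemma mem_toggle_fst_of_ne (hne : w ≠ v) : w ∈ (toggle P v).1 ↔ w ∈ P.1 := by
  by_cases h : v ∈ P.1
  · simp only [toggle, if_pos h]; exact Multiset.mem_erase_of_ne hne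
  · simp only [toggle, if_neg h, Multiset.mem_cons]; tauto

lemma toggle_toggle (hv : v ∈ parts P) (hnd : P.1.Nodup) :
    toggle (toggle P v) v = P := by
  by_cases h : v ∈ P.1
  · have hmem : v ∉ (toggle P v).1 := by rw [mem_toggle_fst hv hnd]; exact not_not_intro h
    simp only [toggle, if_pos h] at *
    rw [if_neg hmem]
    simp only [Multiset.erase_cons_head]
    exact Prod.ext (by simpa using Multiset.cons_erase h) rfl
  · have hmem : v ∈ (toggle P v).1 := (mem_toggle_fst hv hnd).mpr h
    have hv2 : v ∈ P.2 := (mem_parts.mp hv).resolve_left h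
    simp only [toggle, if_neg h] at *
    rw [if_pos hmem]
    simp only [Multiset.erase_cons_head]
    exact Prod.ext rfl (by simpa using Multiset.cons_erase hv2)



noncomputable def vmin (s : Multiset ℕ) : ℕ :=
  if h : s.toFinset.Nonempty then s.toFinset.min' h else 0

noncomputable def vmax (s : Multiset ℕ) : ℕ :=
  if h : s.toFinset.Nonempty then s.toFinset.max' h else 0

lemma tfne {s : Multiset ℕ} (h : s ≠ 0) : s.toFinset.Nonempty := by
  simpa [Multiset.toFinset_nonempty] using h

lemma vmin_mem {s : Multiset ℕ} (h : s ≠ 0) : vmin s ∈ s := by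
  rw [vmin, dif_pos (tfne h)]
  simpa using (s.toFinset.min'_mem (tfne h))

lemma vmin_le {s : Multiset ℕ} {x : ℕ} (hx : x ∈ s) : vmin s ≤ x := by
  have h : s ≠ 0 := fun hc => by simp [hc] at hx
  rw [vmin, dif_pos (tfne h)]
  exact s.toFinset.min'_le x (by simpa using hx)

lemma vmax_mem {s : Multiset ℕ} (h : s ≠ 0) : vmax s ∈ s := by
  rw [vmax, dif_pos (tfne h)]
  simpa using (s.toFinset.max'_mem (tfne h))

lemma le_vmax {s : Multiset ℕ} {x : ℕ} (hx : x ∈ s) : x ≤ vmax s := by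
  have h : s ≠ 0 := fun hc => by simp [hc] at hx
  rw [vmax, dif_pos (tfne h)]
  exact s.toFinset.le_max' x (by simpa using hx)


section Tuples

variable {m : ℕ}

def ok (f : Fin m → OP) : Prop := ∀ i, IsOddOverpartition (f i)

noncomputable def sumP (f : Fin m → OP) : ℕ := ∑ i, (parts (f i)).sum

noncomputable def Jset (f : Fin m → OP) : Finset (Fin m) :=
  Finset.univ.filter (fun i => parts (f i) ≠ 0)

lemma mem_Jset {f : Fin m → OP} {i : Fin m} : i ∈ Jset f ↔ parts (f i) ≠ 0 := by
  simp [Jset]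

noncomputable def sig (f : Fin m → OP) : Fin m → OP :=
  if h : (Jset f).Nonempty then
    Function.update f ((Jset f).min' h)
      (toggle (f ((Jset f).min' h)) (vmin (parts (f ((Jset f).min' h)))))
  else f

noncomputable def tau (f : Fin m → OP) : Fin m → OP :=
  if h : (Jset f).Nonempty then
    Function.update f ((Jset f).max' h)
      (toggle (f ((Jset f).max' h)) (vmax (parts (f ((Jset f).max' h)))))
  else f

def bit1 (f : Fin m → OP) : Prop :=
  ∃ h : (Jset f).Nonempty, vmin (parts (f ((Jset f).min' h))) ∈ (f ((Jset f).min' h)).1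

def bit2 (f : Fin m → OP) : Prop :=
  ∃ h : (Jset f).Nonempty, vmax (parts (f ((Jset f).max' h))) ∈ (f ((Jset f).max' h)).1

def PureParts (f : Fin m → OP) : Prop :=
  ∃ (i : Fin m) (c v : ℕ), (∀ j, j ≠ i → parts (f j) = 0) ∧
    parts (f i) = Multiset.replicate c v

variable {f : Fin m → OP}

lemma vmin_mem_parts (h : (Jset f).Nonempty) :
    vmin (parts (f ((Jset f).min' h))) ∈ parts (f ((Jset f).min' h)) :=
  vmin_mem (mem_Jset.mp ((Jset f).min'_mem h))

lemma vmax_mem_parts (h : (Jset f).Nonempty) :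
    vmax (parts (f ((Jset f).max' h))) ∈ parts (f ((Jset f).max' h)) :=
  vmax_mem (mem_Jset.mp ((Jset f).max'_mem h))

lemma parts_sig (h : (Jset f).Nonempty) (j : Fin m) : parts (sig f j) = parts (f j) := by
  rw [sig, dif_pos h, Function.update_apply]
  split_ifs with hj
  · subst hj; exact parts_toggle (vmin_mem_parts h)
  · rfl

lemma parts_tau (h : (Jset f).Nonempty) (j : Fin m) : parts (tau f j) = parts (f j) := by
  rw [tau, dif_pos h, Function.update_apply]
  split_ifs with hj
  · subst hj; exact parts_toggle (vmax_mem_parts h)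
  · rfl

lemma Jset_sig (h : (Jset f).Nonempty) : Jset (sig f) = Jset f := by
  unfold Jset; apply Finset.filter_congr; intro i _; simp [parts_sig h]

lemma Jset_tau (h : (Jset f).Nonempty) : Jset (tau f) = Jset f := by
  unfold Jset; apply Finset.filter_congr; intro i _; simp [parts_tau h]

lemma sumP_sig (h : (Jset f).Nonempty) : sumP (sig f) = sumP f :=
  Finset.sum_congr rfl fun j _ => by rw [parts_sig h]

lemma sumP_tau (h : (Jset f).Nonempty) : sumP (tau f) = sumP f :=
  Finset.sum_congr rfl fun j _ => by rw [parts_tau h]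

lemma PureParts_sig (h : (Jset f).Nonempty) : PureParts (sig f) ↔ PureParts f := by
  unfold PureParts; simp only [parts_sig h]

lemma PureParts_tau (h : (Jset f).Nonempty) : PureParts (tau f) ↔ PureParts f := by
  unfold PureParts; simp only [parts_tau h]

lemma ok_sig (h : (Jset f).Nonempty) (hok : ok f) : ok (sig f) := by
  intro j
  rw [sig, dif_pos h, Function.update_apply]
  split_ifs with hj
  · subst hj; exact isOdd_toggle (vmin_mem_parts h) (hok _)
  · exact hok j

lemma ok_tau (h : (Jset f).Nonempty) (hok : ok f) : ok (tau f) := by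
  intro j
  rw [tau, dif_pos h, Function.update_apply]
  split_ifs with hj
  · subst hj; exact isOdd_toggle (vmax_mem_parts h) (hok _)
  · exact hok j

lemma sig_apply_min (h : (Jset f).Nonempty) : sig f ((Jset f).min' h)
    = toggle (f ((Jset f).min' h)) (vmin (parts (f ((Jset f).min' h)))) := by
  rw [sig, dif_pos h, Function.update_self]

lemma tau_apply_max (h : (Jset f).Nonempty) : tau f ((Jset f).max' h)
    = toggle (f ((Jset f).max' h)) (vmax (parts (f ((Jset f).max' h)))) := by
  rw [tau, dif_pos h, Function.update_self]

lemma min'_sig (h : (Jset f).Nonempty) (h2 : (Jset (sig f)).Nonempty) :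
    (Jset (sig f)).min' h2 = (Jset f).min' h := by
  congr 1 <;> rw [Jset_sig h]

lemma max'_sig (h : (Jset f).Nonempty) (h2 : (Jset (sig f)).Nonempty) :
    (Jset (sig f)).max' h2 = (Jset f).max' h := by
  congr 1 <;> rw [Jset_sig h]

lemma min'_tau (h : (Jset f).Nonempty) (h2 : (Jset (tau f)).Nonempty) :
    (Jset (tau f)).min' h2 = (Jset f).min' h := by
  congr 1 <;> rw [Jset_tau h]

lemma max'_tau (h : (Jset f).Nonempty) (h2 : (Jset (tau f)).Nonempty) :
    (Jset (tau f)).max' h2 = (Jset f).max' h := by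
  congr 1 <;> rw [Jset_tau h]

lemma sig_sig (h : (Jset f).Nonempty) (hok : ok f) : sig (sig f) = f := by
  have h2 : (Jset (sig f)).Nonempty := by rw [Jset_sig h]; exact h
  rw [show sig (sig f) = Function.update (sig f) ((Jset (sig f)).min' h2)
        (toggle (sig f ((Jset (sig f)).min' h2))
          (vmin (parts (sig f ((Jset (sig f)).min' h2))))) from by rw [sig, dif_pos h2]]
  rw [min'_sig h h2, parts_sig h, sig_apply_min h,
    toggle_toggle (vmin_mem_parts h) (hok _).1]
  rw [sig, dif_pos h, Function.update_idem, Function.update_eq_self]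

lemma tau_tau (h : (Jset f).Nonempty) (hok : ok f) : tau (tau f) = f := by
  have h2 : (Jset (tau f)).Nonempty := by rw [Jset_tau h]; exact h
  rw [show tau (tau f) = Function.update (tau f) ((Jset (tau f)).max' h2)
        (toggle (tau f ((Jset (tau f)).max' h2))
          (vmax (parts (tau f ((Jset (tau f)).max' h2))))) from by rw [tau, dif_pos h2]]
  rw [max'_tau h h2, parts_tau h, tau_apply_max h,
    toggle_toggle (vmax_mem_parts h) (hok _).1]
  rw [tau, dif_pos h, Function.update_idem, Function.update_eq_self]

lemma bit1_iff (h : (Jset f).Nonempty) :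
    bit1 f ↔ vmin (parts (f ((Jset f).min' h))) ∈ (f ((Jset f).min' h)).1 :=
  ⟨fun ⟨_, hq⟩ => hq, fun hq => ⟨h, hq⟩⟩

lemma bit2_iff (h : (Jset f).Nonempty) :
    bit2 f ↔ vmax (parts (f ((Jset f).max' h))) ∈ (f ((Jset f).max' h)).1 :=
  ⟨fun ⟨_, hq⟩ => hq, fun hq => ⟨h, hq⟩⟩

lemma bit1_sig (h : (Jset f).Nonempty) (hok : ok f) : bit1 (sig f) ↔ ¬ bit1 f := by
  have h2 : (Jset (sig f)).Nonempty := by rw [Jset_sig h]; exact h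
  rw [bit1_iff h2, bit1_iff h, min'_sig h h2, parts_sig h, sig_apply_min h,
    mem_toggle_fst (vmin_mem_parts h) (hok _).1]

lemma bit2_tau (h : (Jset f).Nonempty) (hok : ok f) : bit2 (tau f) ↔ ¬ bit2 f := by
  have h2 : (Jset (tau f)).Nonempty := by rw [Jset_tau h]; exact h
  rw [bit2_iff h2, bit2_iff h, max'_tau h h2, parts_tau h, tau_apply_max h,
    mem_toggle_fst (vmax_mem_parts h) (hok _).1]

/-- On non-pure tuples, the min and max targets are distinct. -/
lemma sep_of_not_pure (h : (Jset f).Nonempty) (hnp : ¬ PureParts f) :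
    (Jset f).min' h ≠ (Jset f).max' h ∨
      vmin (parts (f ((Jset f).min' h))) ≠ vmax (parts (f ((Jset f).max' h))) := by
  by_contra hc
  push_neg at hc
  obtain ⟨hie, hve⟩ := hc
  rw [← hie] at hve
  apply hnp
  refine ⟨(Jset f).min' h, Multiset.card (parts (f ((Jset f).min' h))),
    vmin (parts (f ((Jset f).min' h))), fun j hj => ?_, ?_⟩
  · by_contra hj0
    have hjJ : j ∈ Jset f := mem_Jset.mpr hj0
    have h1 := (Jset f).min'_le j hjJ
    have h2 := (Jset f).le_max' j hjJ
    rw [← hie] at h2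
    exact hj (le_antisymm h2 h1)
  · rw [Multiset.eq_replicate]
    refine ⟨rfl, fun b hb => ?_⟩
    have h1 := vmin_le hb
    have h2 := le_vmax hb
    omega

lemma bit2_sig (h : (Jset f).Nonempty) (hnp : ¬ PureParts f) : bit2 (sig f) ↔ bit2 f := by
  have h2 : (Jset (sig f)).Nonempty := by rw [Jset_sig h]; exact h
  rw [bit2_iff h2, bit2_iff h, max'_sig h h2, parts_sig h]
  rcases sep_of_not_pure h hnp with hie | hve
  · rw [sig, dif_pos h, Function.update_of_ne (Ne.symm hie)]
  · by_cases hie : (Jset f).min' h = (Jset f).max' h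
    · rw [← hie] at hve ⊢
      rw [sig_apply_min h, mem_toggle_fst_of_ne (Ne.symm hve)]
    · rw [sig, dif_pos h, Function.update_of_ne (Ne.symm hie)]

lemma bit1_tau (h : (Jset f).Nonempty) (hnp : ¬ PureParts f) : bit1 (tau f) ↔ bit1 f := by
  have h2 : (Jset (tau f)).Nonempty := by rw [Jset_tau h]; exact h
  rw [bit1_iff h2, bit1_iff h, min'_tau h h2, parts_tau h]
  rcases sep_of_not_pure h hnp with hie | hve
  · rw [tau, dif_pos h, Function.update_of_ne hie]
  · by_cases hie : (Jset f).min' h = (Jset f).max' h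
    · rw [hie] at hve ⊢
      rw [tau_apply_max h, mem_toggle_fst_of_ne hve]
    · rw [tau, dif_pos h, Function.update_of_ne hie]

end Tuples

section Fin

variable {m N : ℕ}

def S (m N : ℕ) : Set (Fin m → OP) := {f | ok f ∧ sumP f = N}

lemma card_le_sum {s : Multiset ℕ} (h : ∀ x ∈ s, 1 ≤ x) : Multiset.card s ≤ s.sum := by
  induction s using Multiset.induction_on with
  | empty => simp
  | cons a s ih =>
    have ha := h a (Multiset.mem_cons_self a s)
    have := ih (fun x hx => h x (Multiset.mem_cons_of_mem hx))
    simp only [Multiset.card_cons, Multiset.sum_cons]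
    omega

lemma multiset_le_bound {s : Multiset ℕ} (h1 : ∀ x ∈ s, 1 ≤ x) (h2 : s.sum ≤ N) :
    s ≤ N • Multiset.range (N + 1) := by
  rw [Multiset.le_iff_count]
  intro a
  by_cases ha : a ∈ s
  · have haN : a ≤ N := le_trans (Multiset.single_le_sum (fun x _ => Nat.zero_le x) a ha) h2
    have hcard : Multiset.count a s ≤ Multiset.card s := Multiset.count_le_card a s
    have h3 : Multiset.count a (Multiset.range (N + 1)) = 1 :=
      Multiset.count_eq_one_of_mem (Multiset.nodup_range _) (by
        rw [Multiset.mem_range]; omega)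
    rw [Multiset.count_nsmul, h3, mul_one]
    exact le_trans hcard (le_trans (card_le_sum h1) h2)
  · rw [Multiset.count_eq_zero_of_notMem ha]
    exact Nat.zero_le _

lemma S_finite : (S m N).Finite := by
  classical
  set R := N • Multiset.range (N + 1) with hR
  have hB : ({P : OP | P.1 ≤ R ∧ P.2 ≤ R}).Finite := by
    apply Set.Finite.subset
      (Finset.finite_toSet (R.powerset.toFinset ×ˢ R.powerset.toFinset))
    rintro ⟨a, b⟩ ⟨h1, h2⟩
    simp only [Finset.coe_product, Set.mem_prod, Multiset.mem_toFinset,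
      Multiset.mem_powerset, Finset.mem_coe]
    exact ⟨h1, h2⟩
  have hpi : (Set.pi Set.univ (fun _ : Fin m => {P : OP | P.1 ≤ R ∧ P.2 ≤ R})).Finite :=
    Set.Finite.pi (fun _ => hB)
  apply Set.Finite.subset hpi
  intro f hf
  obtain ⟨hok, hsum⟩ := hf
  rw [Set.mem_univ_pi]
  intro i
  have hbound : (parts (f i)).sum ≤ N := by
    rw [← hsum]
    exact Finset.single_le_sum (f := fun j => (parts (f j)).sum)
      (fun j _ => Nat.zero_le _) (Finset.mem_univ i)
  have hps : (parts (f i)).sum = (f i).1.sum + (f i).2.sum := Multiset.sum_add _ _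
  have h1sum : (f i).1.sum ≤ N := by omega
  have h2sum : (f i).2.sum ≤ N := by omega
  constructor
  · exact multiset_le_bound (fun x hx => ((hok i).2.1 x hx).pos) h1sum
  · exact multiset_le_bound (fun x hx => ((hok i).2.2 x hx).pos) h2sum

lemma nonempty_Jset {f : Fin m → OP} (hf : f ∈ S m N) (hN : N ≠ 0) : (Jset f).Nonempty := by
  by_contra hc
  rw [Finset.not_nonempty_iff_eq_empty] at hc
  apply hN
  rw [← hf.2, sumP]
  apply Finset.sum_eq_zero
  intro i _
  have : parts (f i) = 0 := by
    by_contra h0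
    have : i ∈ Jset f := mem_Jset.mpr h0
    simp [hc] at this
  rw [this]; rfl

end Fin



section PureCount

variable {m N : ℕ}

lemma pair_eq_zero {P : OP} (h : parts P = 0) : P = 0 := by
  have hc := congrArg Multiset.card h
  rw [parts, Multiset.card_add] at hc
  simp only [Multiset.card_zero] at hc
  exact Prod.ext (Multiset.card_eq_zero.mp (by omega)) (Multiset.card_eq_zero.mp (by omega))

lemma replicate_ne_zero {n s : ℕ} (hn : n ≠ 0) : Multiset.replicate n s ≠ 0 := by
  intro hc
  have : s ∈ (0 : Multiset ℕ) := hc ▸ Multiset.mem_replicate.mpr ⟨hn, rfl⟩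
  simp at this

noncomputable def bodyfun (N : ℕ) (s : ℕ) (b : Bool) : OP :=
  cond b ({s}, Multiset.replicate (N / s - 1) s) (0, Multiset.replicate (N / s) s)

noncomputable def gfun (m N : ℕ) (x : Fin m × ℕ × Bool) : Fin m → OP :=
  Function.update (fun _ => (0 : OP)) x.1 (bodyfun N x.2.1 x.2.2)

lemma gfun_self (x : Fin m × ℕ × Bool) : gfun m N x x.1 = bodyfun N x.2.1 x.2.2 :=
  Function.update_self _ _ _

lemma gfun_ne {x : Fin m × ℕ × Bool} {j : Fin m} (hj : j ≠ x.1) : gfun m N x j = 0 :=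
  Function.update_of_ne hj _ _

def PureSet (m N : ℕ) : Set (Fin m → OP) := {f ∈ S m N | PureParts f}

def idxFinset (m N : ℕ) : Finset (Fin m × ℕ × Bool) :=
  Finset.univ ×ˢ N.divisors ×ˢ (Finset.univ : Finset Bool)

lemma parts_bodyfun {s : ℕ} (b : Bool) (hs0 : s ≠ 0) (hc1 : 1 ≤ N / s) :
    parts (bodyfun N s b) = Multiset.replicate (N / s) s := by
  cases b
  · rw [bodyfun, cond_false, parts, zero_add]
  · rw [bodyfun, cond_true, parts]
    rcases Nat.exists_eq_add_of_le hc1 with ⟨e, he⟩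
    rw [he, Multiset.singleton_add]
    simp [Nat.add_comm 1 e, Multiset.replicate_succ]

lemma pure_subset_image (hN : N ≠ 0) :
    PureSet m N ⊆ ↑((idxFinset m N).image (gfun m N)) := by
  rintro f ⟨⟨hok, hsum⟩, i, c, v, hz, hrep⟩
  have hsum' : c * v = N := by
    rw [← hsum, sumP, Finset.sum_eq_single i]
    · rw [hrep, Multiset.sum_replicate, smul_eq_mul]
    · intro j _ hj; rw [hz j hj]; rfl
    · intro hi; exact absurd (Finset.mem_univ i) hi
  have hc : c ≠ 0 := by rintro rfl; simp at hsum'; omega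
  have hv : v ≠ 0 := by rintro rfl; simp at hsum'; omega
  have hvd : v ∈ N.divisors := Nat.mem_divisors.mpr ⟨⟨c, by rw [← hsum', mul_comm]⟩, hN⟩
  have hcv : c = N / v := by
    rw [← hsum', Nat.mul_div_cancel _ (Nat.pos_of_ne_zero hv)]
  have hD : (f i).1 = Multiset.replicate (Multiset.card (f i).1) v := by
    rw [Multiset.eq_replicate]
    exact ⟨rfl, fun b hb => Multiset.eq_of_mem_replicate (hrep ▸
      (mem_parts.mpr (Or.inl hb) : b ∈ parts (f i)))⟩
  have hDcard : Multiset.card (f i).1 ≤ 1 := by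
    have h1 : Multiset.count v (f i).1 ≤ 1 := Multiset.nodup_iff_count_le_one.mp (hok i).1 v
    have h2 : Multiset.count v (f i).1 = Multiset.card (f i).1 := by
      conv_lhs => rw [hD]
      rw [Multiset.count_replicate_self]
    omega
  have hfj0 : ∀ j, j ≠ i → f j = 0 := fun j hj => pair_eq_zero (hz j hj)
  simp only [Finset.coe_image, Set.mem_image, Finset.mem_coe, idxFinset,
    Finset.mem_product, Finset.mem_univ, true_and]
  rcases Nat.le_one_iff_eq_zero_or_eq_one.mp hDcard with hcard | hcard
  · -- D empty
    have hD0 : (f i).1 = 0 := Multiset.card_eq_zero.mp hcard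
    have hM : (f i).2 = Multiset.replicate c v := by
      have h2 := hrep
      rw [parts, hD0, zero_add] at h2
      exact h2
    refine ⟨(i, v, false), by simp [hvd], ?_⟩
    funext j
    by_cases hj : j = i
    · subst hj
      rw [gfun_self (x := (j, v, false)), bodyfun, cond_false, Prod.ext_iff]
      exact ⟨hD0.symm, by rw [hM, hcv]⟩
    · rw [gfun_ne (x := (i, v, false)) hj]
      exact (hfj0 j hj).symm
  · -- D = {v}
    have hD1 : (f i).1 = {v} := by
      have h1 := hD; rw [hcard, Multiset.replicate_one] at h1; exact h1
    have hM : (f i).2 = Multiset.replicate (c - 1) v := by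
      have h2 := hrep
      rw [parts, hD1, Multiset.singleton_add] at h2
      rcases Nat.exists_eq_add_of_lt (Nat.pos_of_ne_zero hc) with ⟨e, he⟩
      have hce : c = e + 1 := by omega
      rw [hce, Multiset.replicate_succ] at h2
      have h3 := (Multiset.cons_inj_right v).mp h2
      rw [h3, hce]; simp
    refine ⟨(i, v, true), by simp [hvd], ?_⟩
    funext j
    by_cases hj : j = i
    · subst hj
      rw [gfun_self (x := (j, v, true)), bodyfun, cond_true, Prod.ext_iff]
      exact ⟨hD1.symm, by rw [hM, hcv]⟩
    · rw [gfun_ne (x := (i, v, true)) hj]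
      exact (hfj0 j hj).symm

lemma image_subset_pure (hN : Odd N) :
    ↑((idxFinset m N).image (gfun m N)) ⊆ PureSet m N := by
  have hN0 : N ≠ 0 := by rintro rfl; simp at hN
  rintro f hf
  simp only [Finset.coe_image, Set.mem_image, Finset.mem_coe, idxFinset,
    Finset.mem_product, Finset.mem_univ, true_and] at hf
  obtain ⟨⟨i, s, b⟩, ⟨hs, -⟩, rfl⟩ := hf
  obtain ⟨hsd, -⟩ := Nat.mem_divisors.mp hs
  have hs0 : s ≠ 0 := by rintro rfl; exact hN0 (Nat.eq_zero_of_zero_dvd hsd)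
  have hodds : Odd s := hN.of_dvd_nat hsd
  have hc1 : 1 ≤ N / s := (Nat.one_le_div_iff (Nat.pos_of_ne_zero hs0)).mpr
    (Nat.le_of_dvd (Nat.pos_of_ne_zero hN0) hsd)
  have hcs : N / s * s = N := Nat.div_mul_cancel hsd
  have hparts : parts (gfun m N (i, s, b) i) = Multiset.replicate (N / s) s := by
    rw [gfun_self (x := (i, s, b))]
    exact parts_bodyfun b hs0 hc1
  have hparts0 : ∀ j, j ≠ i → parts (gfun m N (i, s, b) j) = 0 := by
    intro j hj
    rw [gfun_ne (x := (i, s, b)) hj]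
    rfl
  refine ⟨⟨?_, ?_⟩, i, N / s, s, hparts0, hparts⟩
  · intro j
    by_cases hj : j = i
    · subst hj
      refine ⟨?_, ?_, ?_⟩
      · rw [gfun_self (x := (j, s, b))]
        cases b
        · rw [bodyfun, cond_false]; exact Multiset.nodup_zero
        · rw [bodyfun, cond_true]; exact Multiset.nodup_singleton s
      · intro x hx
        have hxp : x ∈ parts (gfun m N (j, s, b) j) := mem_parts.mpr (Or.inl hx)
        rw [hparts] at hxp
        rw [Multiset.eq_of_mem_replicate hxp]; exact hodds
      · intro x hx
        have hxp : x ∈ parts (gfun m N (j, s, b) j) := mem_parts.mpr (Or.inr hx)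
        rw [hparts] at hxp
        rw [Multiset.eq_of_mem_replicate hxp]; exact hodds
    · have h0 := pair_eq_zero (hparts0 j hj)
      rw [h0]
      exact ⟨Multiset.nodup_zero, by simp, by simp⟩
  · rw [sumP, Finset.sum_eq_single i]
    · rw [hparts, Multiset.sum_replicate, smul_eq_mul, hcs]
    · intro j _ hj; rw [hparts0 j hj]; rfl
    · intro hi; exact absurd (Finset.mem_univ i) hi

lemma gfun_injOn (hN : N ≠ 0) :
    Set.InjOn (gfun m N) ↑(idxFinset m N) := by
  rintro ⟨i, s, b⟩ hx ⟨i', s', b'⟩ hy heq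
  rw [Finset.mem_coe] at hx hy
  simp only [idxFinset, Finset.mem_product, Finset.mem_univ, true_and,
    Nat.mem_divisors] at hx hy
  obtain ⟨⟨hsd, -⟩, -⟩ := hx
  obtain ⟨⟨hsd', -⟩, -⟩ := hy
  have hs0 : s ≠ 0 := by rintro rfl; exact hN (Nat.eq_zero_of_zero_dvd hsd)
  have hs0' : s' ≠ 0 := by rintro rfl; exact hN (Nat.eq_zero_of_zero_dvd hsd')
  have hc1 : 1 ≤ N / s := (Nat.one_le_div_iff (Nat.pos_of_ne_zero hs0)).mpr
    (Nat.le_of_dvd (Nat.pos_of_ne_zero hN) hsd)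
  have hc1' : 1 ≤ N / s' := (Nat.one_le_div_iff (Nat.pos_of_ne_zero hs0')).mpr
    (Nat.le_of_dvd (Nat.pos_of_ne_zero hN) hsd')
  have hnz : ∀ (s₀ : ℕ) (b₀ : Bool), s₀ ≠ 0 → 1 ≤ N / s₀ → bodyfun N s₀ b₀ ≠ 0 := by
    intro s₀ b₀ h0 h1 hc
    cases b₀
    · rw [bodyfun, cond_false] at hc
      exact replicate_ne_zero (n := N / s₀) (s := s₀) (by omega) (congrArg Prod.snd hc)
    · rw [bodyfun, cond_true] at hc
      have h1 : ({s₀} : Multiset ℕ) = 0 := congrArg Prod.fst hc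
      simp at h1
  have hii : i = i' := by
    by_contra hii
    apply hnz s' b' hs0' hc1'
    have h1 := congrFun heq i'
    rw [gfun_ne (x := (i, s, b)) (Ne.symm hii), gfun_self (x := (i', s', b'))] at h1
    exact h1.symm
  subst hii
  have hcomp := congrFun heq i
  rw [gfun_self (x := (i, s, b)), gfun_self (x := (i, s', b'))] at hcomp
  have hbb : b = b' := by
    by_contra hbb
    cases b <;> cases b'
    · exact hbb rfl
    · rw [bodyfun, bodyfun, cond_false, cond_true] at hcomp
      have h1 : (0 : Multiset ℕ) = {s'} := congrArg Prod.fst hcomp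
      simp at h1
    · rw [bodyfun, bodyfun, cond_true, cond_false] at hcomp
      have h1 : ({s} : Multiset ℕ) = 0 := congrArg Prod.fst hcomp
      simp at h1
    · exact hbb rfl
  subst hbb
  have hss : s = s' := by
    cases b
    · rw [bodyfun, bodyfun, cond_false, cond_false] at hcomp
      have h2 : Multiset.replicate (N / s) s = Multiset.replicate (N / s') s' :=
        congrArg Prod.snd hcomp
      have h3 : s ∈ Multiset.replicate (N / s') s' := by
        rw [← h2]; exact Multiset.mem_replicate.mpr ⟨by omega, rfl⟩
      exact Multiset.eq_of_mem_replicate h3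
    · rw [bodyfun, bodyfun, cond_true, cond_true] at hcomp
      have h2 : ({s} : Multiset ℕ) = {s'} := congrArg Prod.fst hcomp
      simpa using h2
  rw [hss]

lemma pure_ncard (hN : Odd N) :
    (PureSet m N).ncard = 2 * m * N.divisors.card := by
  have hN0 : N ≠ 0 := by rintro rfl; simp at hN
  have heq : PureSet m N = ↑((idxFinset m N).image (gfun m N)) :=
    Set.Subset.antisymm (pure_subset_image hN0) (image_subset_pure hN)
  rw [heq, Set.ncard_coe_finset, Finset.card_image_of_injOn (gfun_injOn hN0)]
  simp [idxFinset, Finset.card_product]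
  ring

end PureCount

section Classes

variable {m N : ℕ}

def C (m N : ℕ) (a b : Bool) : Set (Fin m → OP) :=
  {f | f ∈ S m N ∧ ¬ PureParts f ∧ (bit1 f ↔ a = true) ∧ (bit2 f ↔ b = true)}

lemma sig_mem_C (hN : N ≠ 0) {a b : Bool} {f : Fin m → OP} (hf : f ∈ C m N a b) :
    sig f ∈ C m N (!a) b := by
  obtain ⟨hfS, hnp, h1, h2⟩ := hf
  have h := nonempty_Jset hfS hN
  have hok := hfS.1
  refine ⟨⟨ok_sig h hok, by rw [sumP_sig h]; exact hfS.2⟩, ?_, ?_, ?_⟩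
  · rw [PureParts_sig h]; exact hnp
  · rw [bit1_sig h hok]; cases a <;> simp [h1]
  · rw [bit2_sig h hnp]; exact h2

lemma tau_mem_C (hN : N ≠ 0) {a b : Bool} {f : Fin m → OP} (hf : f ∈ C m N a b) :
    tau f ∈ C m N a (!b) := by
  obtain ⟨hfS, hnp, h1, h2⟩ := hf
  have h := nonempty_Jset hfS hN
  have hok := hfS.1
  refine ⟨⟨ok_tau h hok, by rw [sumP_tau h]; exact hfS.2⟩, ?_, ?_, ?_⟩
  · rw [PureParts_tau h]; exact hnp
  · rw [bit1_tau h hnp]; exact h1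
  · rw [bit2_tau h hok]; cases b <;> simp [h2]

lemma sig_image (hN : N ≠ 0) (a b : Bool) : sig '' C m N a b = C m N (!a) b := by
  apply Set.Subset.antisymm
  · rintro _ ⟨f, hf, rfl⟩; exact sig_mem_C hN hf
  · intro f hf
    refine ⟨sig f, ?_, sig_sig (nonempty_Jset hf.1 hN) hf.1.1⟩
    have h2 := sig_mem_C hN hf
    rwa [Bool.not_not] at h2

lemma tau_image (hN : N ≠ 0) (a b : Bool) : tau '' C m N a b = C m N a (!b) := by
  apply Set.Subset.antisymm
  · rintro _ ⟨f, hf, rfl⟩; exact tau_mem_C hN hf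
  · intro f hf
    refine ⟨tau f, ?_, tau_tau (nonempty_Jset hf.1 hN) hf.1.1⟩
    have h2 := tau_mem_C hN hf
    rwa [Bool.not_not] at h2

lemma sig_injOn (hN : N ≠ 0) (a b : Bool) : Set.InjOn sig (C m N a b) :=
  fun f hf g hg he => by
    rw [← sig_sig (nonempty_Jset hf.1 hN) hf.1.1, he,
      sig_sig (nonempty_Jset hg.1 hN) hg.1.1]

lemma tau_injOn (hN : N ≠ 0) (a b : Bool) : Set.InjOn tau (C m N a b) :=
  fun f hf g hg he => by
    rw [← tau_tau (nonempty_Jset hf.1 hN) hf.1.1, he,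
      tau_tau (nonempty_Jset hg.1 hN) hg.1.1]

lemma C_ncard_sig (hN : N ≠ 0) (a b : Bool) :
    (C m N (!a) b).ncard = (C m N a b).ncard := by
  rw [← sig_image hN a b, Set.ncard_image_of_injOn (sig_injOn hN a b)]

lemma C_ncard_tau (hN : N ≠ 0) (a b : Bool) :
    (C m N a (!b)).ncard = (C m N a b).ncard := by
  rw [← tau_image hN a b, Set.ncard_image_of_injOn (tau_injOn hN a b)]

lemma C_subset_S (a b : Bool) : C m N a b ⊆ S m N := fun _ hf => hf.1

lemma S_eq_union :
    S m N = PureSet m N ∪ (C m N false false ∪ C m N true false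
      ∪ C m N false true ∪ C m N true true) := by
  ext f
  constructor
  · intro hf
    by_cases hp : PureParts f
    · exact Or.inl ⟨hf, hp⟩
    · right
      by_cases h1 : bit1 f <;> by_cases h2 : bit2 f
      · exact Or.inr ⟨hf, hp, by simp [h1], by simp [h2]⟩
      · exact Or.inl (Or.inl (Or.inr ⟨hf, hp, by simp [h1], by simp [h2]⟩))
      · exact Or.inl (Or.inr ⟨hf, hp, by simp [h1], by simp [h2]⟩)
      · exact Or.inl (Or.inl (Or.inl ⟨hf, hp, by simp [h1], by simp [h2]⟩))
  · rintro (hf | ((( hf | hf) | hf) | hf))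
    · exact hf.1
    all_goals exact hf.1

lemma disj_C {a b a' b' : Bool} (h : a ≠ a' ∨ b ≠ b') :
    Disjoint (C m N a b) (C m N a' b') := by
  rw [Set.disjoint_left]
  rintro f ⟨-, -, h1, h2⟩ ⟨-, -, h1', h2'⟩
  rcases h with h | h
  · rcases Bool.eq_false_or_eq_true a with ha | ha <;>
      rcases Bool.eq_false_or_eq_true a' with ha' | ha' <;>
      subst ha <;> subst ha' <;> simp_all
  · rcases Bool.eq_false_or_eq_true b with hb | hb <;>
      rcases Bool.eq_false_or_eq_true b' with hb' | hb' <;>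
      subst hb <;> subst hb' <;> simp_all

lemma disj_pure_C (a b : Bool) : Disjoint (PureSet m N) (C m N a b) := by
  rw [Set.disjoint_left]
  rintro f ⟨-, hp⟩ ⟨-, hnp, -⟩
  exact hnp hp

lemma master_count (hN : Odd N) :
    (S m N).ncard = 2 * m * N.divisors.card + 4 * (C m N false false).ncard := by
  have hN0 : N ≠ 0 := by rintro rfl; simp at hN
  have hSfin : (S m N).Finite := S_finite
  have hPfin : (PureSet m N).Finite := hSfin.subset (fun f hf => hf.1)
  have hCfin : ∀ a b, (C m N a b).Finite := fun a b => hSfin.subset (C_subset_S a b)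
  have h1 : (C m N true false).ncard = (C m N false false).ncard :=
    C_ncard_sig hN0 false false
  have h2 : (C m N false true).ncard = (C m N false false).ncard :=
    C_ncard_tau hN0 false false
  have h3 : (C m N true true).ncard = (C m N true false).ncard :=
    C_ncard_tau hN0 true false
  rw [show (S m N) = PureSet m N ∪ (C m N false false ∪ C m N true false
      ∪ C m N false true ∪ C m N true true) from S_eq_union]
  rw [Set.ncard_union_eq (by
      refine Set.disjoint_union_right.mpr ⟨?_, ?_⟩
      · refine Set.disjoint_union_right.mpr ⟨?_, ?_⟩
        · refine Set.disjoint_union_right.mpr ⟨?_, ?_⟩ <;> exact disj_pure_C _ _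
        · exact disj_pure_C _ _
      · exact disj_pure_C _ _)
    hPfin (((((hCfin _ _).union (hCfin _ _)).union (hCfin _ _)).union (hCfin _ _)))]
  rw [Set.ncard_union_eq (by
      refine Set.disjoint_union_left.mpr ⟨?_, ?_⟩
      · refine Set.disjoint_union_left.mpr ⟨?_, ?_⟩ <;> exact disj_C (by simp)
      · exact disj_C (by simp))
    ((((hCfin _ _).union (hCfin _ _)).union (hCfin _ _))) (hCfin _ _)]
  rw [Set.ncard_union_eq (by
      refine Set.disjoint_union_left.mpr ⟨?_, ?_⟩ <;> exact disj_C (by simp))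
    (((hCfin _ _).union (hCfin _ _))) (hCfin _ _)]
  rw [Set.ncard_union_eq (disj_C (by simp)) (hCfin _ _) (hCfin _ _)]
  rw [pure_ncard hN, h1, h2, h3, h1]
  ring

end Classes

lemma OPT_eq_ncard (m n : ℕ) : OPT m n = (S m n).ncard := by
  unfold OPT
  congr 1
  ext f
  constructor
  · rintro ⟨h1, h2⟩
    refine ⟨h1, ?_⟩
    rw [sumP, ← h2]
    exact Finset.sum_congr rfl fun i _ => (Multiset.sum_add _ _)
  · rintro ⟨h1, h2⟩
    refine ⟨h1, ?_⟩
    rw [← h2, sumP]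
    exact Finset.sum_congr rfl fun i _ => (Multiset.sum_add _ _).symm

/-- The master congruence: for odd `N` with an even number of divisors,
`OPT m N ≡ 0 (mod 4)`. -/
lemma OPT_mod_four (m N : ℕ) (hN : Odd N) (hd : 2 ∣ N.divisors.card) :
    OPT m N ≡ 0 [MOD 4] := by
  rw [Nat.modEq_zero_iff_dvd, OPT_eq_ncard, master_count hN]
  obtain ⟨e, he⟩ := hd
  rw [he]
  exact Dvd.dvd.add ⟨m * e, by ring⟩ ⟨(C m N false false).ncard, rfl⟩

end OptProof


/-- For a prime `p ≥ 3`, all `n, α, δ ≥ 0`, `k ≥ 1` and `t ∈ {1, …, p-1}`,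
`OPT_{2k+1}(2·3^{2α}·p^{2δ+1}(pn+t) + 3^{2α}·p^{2(δ+1)}) ≡ 0 (mod 4)`. -/
theorem opt_odd_tuple_inf_family_mod_four (p : ℕ) (hp : p.Prime) (hp3 : 3 ≤ p)
    (n α δ k t : ℕ) (hk : 1 ≤ k) (ht1 : 1 ≤ t) (ht2 : t ≤ p - 1) :
    OPT (2 * k + 1)
        (2 * 3 ^ (2 * α) * p ^ (2 * δ + 1) * (p * n + t) + 3 ^ (2 * α) * p ^ (2 * (δ + 1)))
      ≡ 0 [MOD 4] := by
  set w : ℕ := 2 * (p * n + t) + p with hw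
  have hfact : 2 * 3 ^ (2 * α) * p ^ (2 * δ + 1) * (p * n + t) + 3 ^ (2 * α) * p ^ (2 * (δ + 1))
      = 3 ^ (2 * α) * p ^ (2 * δ + 1) * w := by
    rw [hw]; ring
  rw [hfact]
  set N : ℕ := 3 ^ (2 * α) * p ^ (2 * δ + 1) * w with hN
  have hpodd : Odd p := hp.odd_of_ne_two (by omega)
  have hwodd : Odd w := by
    rcases hpodd with ⟨j, hj⟩
    exact ⟨p * n + t + j, by omega⟩
  have hNodd : Odd N := by
    refine Odd.mul (Odd.mul ?_ ?_) hwodd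
    · exact Odd.pow (⟨1, by norm_num⟩ : Odd 3)
    · exact hpodd.pow
  have hN0 : N ≠ 0 := by
    rintro hc
    rw [hc] at hNodd
    simp at hNodd
  have h30 : (3 : ℕ) ^ (2 * α) ≠ 0 := by positivity
  have hp0 : p ^ (2 * δ + 1) ≠ 0 := pow_ne_zero _ hp.pos.ne'
  have hw0 : w ≠ 0 := by omega
  -- p does not divide w
  have hpw : ¬ p ∣ w := by
    intro hdvd
    have h2t : p ∣ 2 * t := by
      have h1 : p ∣ 2 * (p * n) + p := ⟨2 * n + 1, by ring⟩
      have h2 : w = 2 * (p * n) + p + 2 * t := by rw [hw]; ring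
      rw [h2] at hdvd
      exact (Nat.dvd_add_right h1).mp hdvd
    rcases (Nat.Prime.dvd_mul hp).mp h2t with h | h
    · have := Nat.le_of_dvd (by norm_num) h; omega
    · have := Nat.le_of_dvd (by omega) h; omega
  -- the exponent of p in N is odd
  have hval : Odd (N.factorization p) := by
    have h1 : N.factorization p
        = (3 ^ (2 * α)).factorization p + (p ^ (2 * δ + 1)).factorization p
          + w.factorization p := by
      rw [hN, Nat.factorization_mul (mul_ne_zero h30 hp0) hw0,
        Nat.factorization_mul h30 hp0]
      simp
    have h2 : (p ^ (2 * δ + 1)).factorization p = 2 * δ + 1 := by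
      rw [hp.factorization_pow, Finsupp.single_apply, if_pos rfl]
    have h3 : w.factorization p = 0 := Nat.factorization_eq_zero_of_not_dvd hpw
    have h4 : (3 ^ (2 * α)).factorization p = if 3 = p then 2 * α else 0 := by
      rw [Nat.Prime.factorization_pow (by norm_num), Finsupp.single_apply]
    rw [h1, h2, h3, h4]
    split_ifs
    · exact ⟨α + δ, by ring⟩
    · exact ⟨δ, by ring⟩
  -- hence the number of divisors is even
  have hdiv : 2 ∣ N.divisors.card := by
    rw [Nat.card_divisors hN0]
    have hmem : p ∈ N.primeFactors := Nat.mem_primeFactors.mpr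
      ⟨hp, ⟨3 ^ (2 * α) * p ^ (2 * δ) * w, by
        rw [hN, pow_succ]; ring⟩, hN0⟩
    refine dvd_trans ?_ (Finset.dvd_prod_of_mem _ hmem)
    rcases hval with ⟨j, hj⟩
    exact ⟨j + 1, by omega⟩
  exact OptProof.OPT_mod_four (2 * k + 1) N hNodd hdiv
end

section
/- For all integers n ≥ 0, the number of overpartition triples with odd parts satisfies OPT(2n) ≡ OPT(n) (mod 4). -/
open Multiset Finset

open scoped Classical

/-- A bounding multiset: every multiset of positive integers with sum ≤ n is ≤ bnd n. -/
def bnd (n : ℕ) : Multiset ℕ := n • Multiset.range (n + 1)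

lemma le_bnd {M : Multiset ℕ} {n : ℕ} (h1 : ∀ x ∈ M, Odd x) (h2 : M.sum ≤ n) :
    M ≤ bnd n := by
  rw [Multiset.le_iff_count]
  intro a
  rcases Nat.eq_zero_or_pos (M.count a) with h | h
  · simp [h]
  · have ha : a ∈ M := by rwa [← Multiset.count_pos]
    have ha1 : 1 ≤ a := (h1 a ha).pos
    have hrep : Multiset.replicate (M.count a) a ≤ M :=
      Multiset.le_count_iff_replicate_le.1 le_rfl
    obtain ⟨u, hu⟩ := Multiset.le_iff_exists_add.1 hrep
    have hsum : M.count a * a ≤ M.sum := by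
      conv_rhs => rw [hu]
      rw [Multiset.sum_add, Multiset.sum_replicate, smul_eq_mul]
      exact Nat.le_add_right _ _
    have hc : M.count a ≤ n := le_trans (Nat.le_trans (Nat.le_mul_of_pos_right _ ha1) hsum) h2
    have han : a < n + 1 := by
      have : a ≤ M.count a * a := Nat.le_mul_of_pos_left a h
      omega
    rw [bnd, Multiset.count_nsmul,
      Multiset.count_eq_one_of_mem (Multiset.nodup_range _) (Multiset.mem_range.2 han)]
    omega

/-- The finite set of overpartition triples with odd parts of `n`. -/
noncomputable def Sfin (n : ℕ) : Finset (Fin 3 → Multiset ℕ × Multiset ℕ) :=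
  (Fintype.piFinset fun _ => (bnd n).powerset.toFinset ×ˢ (bnd n).powerset.toFinset).filter
    (fun f => (∀ i, IsOddOverpartition (f i)) ∧ (∑ i, ((f i).1.sum + (f i).2.sum)) = n)

lemma mem_Sfin {n : ℕ} {f : Fin 3 → Multiset ℕ × Multiset ℕ} :
    f ∈ Sfin n ↔ (∀ i, IsOddOverpartition (f i)) ∧ (∑ i, ((f i).1.sum + (f i).2.sum)) = n := by
  rw [Sfin, Finset.mem_filter, and_iff_right_iff_imp]
  rintro ⟨h1, h2⟩
  rw [Fintype.mem_piFinset]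
  intro i
  have hle : (f i).1.sum + (f i).2.sum ≤ n := by
    rw [← h2]
    exact Finset.single_le_sum (f := fun i => (f i).1.sum + (f i).2.sum)
      (fun _ _ => Nat.zero_le _) (Finset.mem_univ i)
  rw [Finset.mem_product]
  constructor <;> rw [Multiset.mem_toFinset, Multiset.mem_powerset]
  · exact le_bnd (h1 i).2.1 (by omega)
  · exact le_bnd (h1 i).2.2 (by omega)

lemma OPT_eq_card (n : ℕ) : OPT 3 n = (Sfin n).card := by
  rw [OPT, ← Set.ncard_coe_finset]
  congr 1
  ext f
  simp only [Set.mem_setOf_eq, Finset.coe_filter, Finset.mem_coe, mem_Sfin]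

/-- The finite set of "shapes": triples of multisets of odd numbers with total sum `n`. -/
noncomputable def Tfin (n : ℕ) : Finset (Fin 3 → Multiset ℕ) :=
  (Fintype.piFinset fun _ => (bnd n).powerset.toFinset).filter
    (fun g => (∀ i, ∀ x ∈ g i, Odd x) ∧ (∑ i, (g i).sum) = n)

lemma mem_Tfin {n : ℕ} {g : Fin 3 → Multiset ℕ} :
    g ∈ Tfin n ↔ (∀ i, ∀ x ∈ g i, Odd x) ∧ (∑ i, (g i).sum) = n := by
  rw [Tfin, Finset.mem_filter, and_iff_right_iff_imp]
  rintro ⟨h1, h2⟩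
  rw [Fintype.mem_piFinset]
  intro i
  rw [Multiset.mem_toFinset, Multiset.mem_powerset]
  refine le_bnd (h1 i) ?_
  rw [← h2]
  exact Finset.single_le_sum (f := fun i => (g i).sum) (fun _ _ => Nat.zero_le _)
    (Finset.mem_univ i)

/-- The number of distinct part sizes of a shape. -/
def pnum (g : Fin 3 → Multiset ℕ) : ℕ := ∑ i, (g i).toFinset.card

lemma fiber_card {n : ℕ} (g : Fin 3 → Multiset ℕ) (hg : g ∈ Tfin n) :
    ((Sfin n).filter (fun f => (fun i => (f i).1 + (f i).2) = g)).card = 2 ^ pnum g := by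
  rw [mem_Tfin] at hg
  have hcard : (Fintype.piFinset fun i => (g i).toFinset.powerset).card = 2 ^ pnum g := by
    rw [Fintype.card_piFinset, pnum]
    rw [← Finset.prod_pow_eq_pow_sum]
    exact Finset.prod_congr rfl fun i _ => Finset.card_powerset _
  rw [← hcard]
  refine Finset.card_bij' (fun f _ => fun i => (f i).1.toFinset)
    (fun A _ => fun i => ((A i).val, g i - (A i).val)) ?_ ?_ ?_ ?_
  · -- forward maps into piFinset
    intro f hf
    rw [Finset.mem_filter, mem_Sfin] at hf
    obtain ⟨⟨h1, _⟩, h2⟩ := hf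
    rw [Fintype.mem_piFinset]
    intro i
    rw [Finset.mem_powerset, Multiset.toFinset_subset]
    have : (f i).1 ≤ g i := by
      rw [← congrFun h2 i]; exact Multiset.le_add_right _ _
    exact Multiset.subset_of_le this
  · -- backward maps into the fiber
    intro A hA
    rw [Fintype.mem_piFinset] at hA
    have hAle : ∀ i, (A i).val ≤ g i := by
      intro i
      have := hA i
      rw [Finset.mem_powerset] at this
      rw [Multiset.le_iff_subset (A i).nodup]
      intro x hx
      have : x ∈ (g i).toFinset := this hx
      rwa [Multiset.mem_toFinset] at this
    have hPhi : (fun i => (A i).val + (g i - (A i).val)) = g := by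
      funext i
      exact add_tsub_cancel_of_le (hAle i)
    rw [Finset.mem_filter, mem_Sfin]
    refine ⟨⟨fun i => ⟨(A i).nodup, ?_, ?_⟩, ?_⟩, hPhi⟩
    · intro x hx
      exact hg.1 i x (Multiset.subset_of_le (hAle i) hx)
    · intro x hx
      exact hg.1 i x (Multiset.subset_of_le (tsub_le_self) hx)
    · calc (∑ i, ((A i).val.sum + (g i - (A i).val).sum))
          = ∑ i, (g i).sum := by
            refine Finset.sum_congr rfl fun i _ => ?_
            rw [← Multiset.sum_add, add_tsub_cancel_of_le (hAle i)]
        _ = n := hg.2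
  · -- left inverse
    intro f hf
    rw [Finset.mem_filter, mem_Sfin] at hf
    obtain ⟨⟨h1, _⟩, h2⟩ := hf
    funext i
    have hnd : (f i).1.toFinset.val = (f i).1 := by
      rw [Multiset.toFinset_val, Multiset.dedup_eq_self.2 (h1 i).1]
    refine Prod.ext ?_ ?_
    · exact hnd
    · show g i - (f i).1.toFinset.val = (f i).2
      have h2i : (f i).1 + (f i).2 = g i := congrFun h2 i
      rw [hnd, ← h2i]
      simp
  · -- right inverse
    intro A hA
    funext i
    exact Finset.val_toFinset _

lemma OPT_eq_sum (n : ℕ) : OPT 3 n = ∑ g ∈ Tfin n, 2 ^ pnum g := by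
  rw [OPT_eq_card]
  rw [Finset.card_eq_sum_card_fiberwise (f := fun f => fun i => (f i).1 + (f i).2)
    (t := Tfin n)]
  · exact Finset.sum_congr rfl fun g hg => fiber_card g hg
  · intro f hf
    rw [Finset.mem_coe, mem_Sfin] at hf
    rw [Finset.mem_coe, mem_Tfin]
    refine ⟨fun i x hx => ?_, ?_⟩
    · rcases Multiset.mem_add.1 hx with h | h
      · exact (hf.1 i).2.1 x h
      · exact (hf.1 i).2.2 x h
    · calc (∑ i, ((f i).1 + (f i).2).sum) = ∑ i, ((f i).1.sum + (f i).2.sum) := by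
            simp [Multiset.sum_add]
        _ = n := hf.2

lemma OPT_mod4 {n : ℕ} (hn : 1 ≤ n) :
    (OPT 3 n : ZMod 4) = 2 * ((Tfin n).filter (fun g => pnum g = 1)).card := by
  rw [OPT_eq_sum]
  push_cast
  rw [← Finset.sum_filter_add_sum_filter_not (Tfin n) (fun g => pnum g = 1)]
  have h2 : ∑ g ∈ (Tfin n).filter (fun g => ¬ pnum g = 1), (2 : ZMod 4) ^ pnum g = 0 := by
    apply Finset.sum_eq_zero
    intro g hg
    rw [Finset.mem_filter] at hg
    obtain ⟨hgT, hg1⟩ := hg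
    have hne0 : pnum g ≠ 0 := by
      intro h0
      have : ∀ i, (g i).toFinset.card = 0 := by
        intro i
        have := Finset.sum_eq_zero_iff.1 h0
        exact this i (Finset.mem_univ i)
      have hz : ∀ i, g i = 0 := by
        intro i
        have := this i
        rw [Finset.card_eq_zero, Multiset.toFinset_eq_empty] at this
        exact this
      rw [mem_Tfin] at hgT
      have := hgT.2
      simp [hz] at this
      omega
    have h2le : 2 ≤ pnum g := by omega
    have h0 : (((2 : ℕ) ^ pnum g : ℕ) : ZMod 4) = 0 := by
      rw [ZMod.natCast_eq_zero_iff]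
      calc (4 : ℕ) = 2 ^ 2 := rfl
      _ ∣ 2 ^ pnum g := pow_dvd_pow 2 h2le
    push_cast at h0
    exact_mod_cast h0
  rw [h2, add_zero]
  have hcongr : ∑ g ∈ (Tfin n).filter (fun g => pnum g = 1), (2 : ZMod 4) ^ pnum g
      = ∑ _g ∈ (Tfin n).filter (fun g => pnum g = 1), (2 : ZMod 4) := by
    refine Finset.sum_congr rfl fun g hg => ?_
    rw [(Finset.mem_filter.1 hg).2, pow_one]
  rw [hcongr, Finset.sum_const, nsmul_eq_mul, mul_comm]

lemma T1_card (n : ℕ) (hn : 1 ≤ n) :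
    ((Tfin n).filter (fun g => pnum g = 1)).card
      = ((Tfin (2 * n)).filter (fun g => pnum g = 1)).card := by
  apply Finset.card_bij (fun g _ => fun i => g i + g i)
  · -- maps into target
    intro g hg
    rw [Finset.mem_filter, mem_Tfin] at hg ⊢
    obtain ⟨⟨h1, h2⟩, h3⟩ := hg
    refine ⟨⟨fun i x hx => ?_, ?_⟩, ?_⟩
    · rcases Multiset.mem_add.1 hx with h | h <;> exact h1 i x h
    · calc (∑ i, (g i + g i).sum) = 2 * ∑ i, (g i).sum := by
            rw [Finset.mul_sum]
            exact Finset.sum_congr rfl fun i _ => by rw [Multiset.sum_add]; ring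
      _ = 2 * n := by rw [h2]
    · rw [pnum] at h3 ⊢
      rw [← h3]
      refine Finset.sum_congr rfl fun i _ => ?_
      congr 1
      ext x
      simp [Multiset.mem_toFinset]
  · -- injective
    intro g1 h1 g2 h2 heq
    funext i
    have := congrFun heq i
    ext x
    have hc := congrArg (Multiset.count x) this
    simp only [Multiset.count_add] at hc
    omega
  · -- surjective
    intro g hg
    rw [Finset.mem_filter, mem_Tfin] at hg
    obtain ⟨⟨hodd, hsum⟩, hp⟩ := hg
    rw [pnum, Fin.sum_univ_three] at hp
    have hcases : ((g 0).toFinset.card = 1 ∧ (g 1).toFinset.card = 0 ∧ (g 2).toFinset.card = 0)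
        ∨ ((g 0).toFinset.card = 0 ∧ (g 1).toFinset.card = 1 ∧ (g 2).toFinset.card = 0)
        ∨ ((g 0).toFinset.card = 0 ∧ (g 1).toFinset.card = 0 ∧ (g 2).toFinset.card = 1) := by
      omega
    -- extract the unique nonzero component
    have key : ∀ i0 : Fin 3, (g i0).toFinset.card = 1 → (∀ j, j ≠ i0 → g j = 0) →
        ∃ h ∈ (Tfin n).filter (fun g => pnum g = 1), (fun i => h i + h i) = g := by
      intro i0 hcard hzero
      obtain ⟨m, hm⟩ := Finset.card_eq_one.1 hcard
      have hmem : m ∈ g i0 := by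
        rw [← Multiset.mem_toFinset, hm]; exact Finset.mem_singleton_self m
      have hrep : g i0 = Multiset.replicate (Multiset.card (g i0)) m := by
        rw [Multiset.eq_replicate_card]
        intro b hb
        have : b ∈ (g i0).toFinset := Multiset.mem_toFinset.2 hb
        rw [hm, Finset.mem_singleton] at this
        exact this
      set c := Multiset.card (g i0) with hc
      have hsum0 : (g i0).sum = c * m := by
        rw [hrep, Multiset.sum_replicate, smul_eq_mul]
      have htot : c * m = 2 * n := by
        rw [← hsum0, ← hsum]
        rw [Finset.sum_eq_single i0]
        · intro b _ hb; rw [hzero b hb]; rfl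
        · intro h; exact absurd (Finset.mem_univ i0) h
      have hmodd : Odd m := hodd i0 m hmem
      have hceven : Even c := by
        rcases Nat.even_mul.1 (htot ▸ (even_two_mul n)) with h | h
        · exact h
        · exact absurd h (Nat.not_even_iff_odd.2 hmodd)
      obtain ⟨d, hd⟩ := hceven
      have hdm : d * m = n := by
        have : 2 * (d * m) = 2 * n := by rw [← htot, hd]; ring
        omega
      have hd0 : d ≠ 0 := by
        intro h; rw [h] at hdm; simp at hdm; omega
      refine ⟨fun i => if i = i0 then Multiset.replicate d m else 0, ?_, ?_⟩
      · rw [Finset.mem_filter, mem_Tfin]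
        refine ⟨⟨fun i x hx => ?_, ?_⟩, ?_⟩
        · by_cases h : i = i0
          · rw [h] at hx; simp only [if_pos rfl] at hx
            rw [Multiset.eq_of_mem_replicate hx]; exact hmodd
          · simp [h] at hx
        · rw [Finset.sum_eq_single i0]
          · rw [if_pos rfl, Multiset.sum_replicate, smul_eq_mul, hdm]
          · intro b _ hb; rw [if_neg hb]; rfl
          · intro h; exact absurd (Finset.mem_univ i0) h
        · rw [pnum, Finset.sum_eq_single i0]
          · rw [if_pos rfl]
            have : (Multiset.replicate d m).toFinset = {m} := by
              ext x
              simp [Multiset.mem_replicate, hd0]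
            rw [this]
            exact Finset.card_singleton m
          · intro b _ hb; rw [if_neg hb]; simp
          · intro h; exact absurd (Finset.mem_univ i0) h
      · funext i
        by_cases h : i = i0
        · show (if i = i0 then Multiset.replicate d m else 0)
              + (if i = i0 then Multiset.replicate d m else 0) = g i
          rw [if_pos h, ← Multiset.replicate_add, h, hrep, hd]
        · show (if i = i0 then Multiset.replicate d m else 0)
              + (if i = i0 then Multiset.replicate d m else 0) = g i
          rw [if_neg h, hzero i h]; rfl
    have hzero_of_card : ∀ j : Fin 3, (g j).toFinset.card = 0 → g j = 0 := by
      intro j hj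
      rwa [Finset.card_eq_zero, Multiset.toFinset_eq_empty] at hj
    have trich : ∀ j : Fin 3, j = 0 ∨ j = 1 ∨ j = 2 := by decide
    rcases hcases with ⟨h0, h1, h2⟩ | ⟨h0, h1, h2⟩ | ⟨h0, h1, h2⟩
    · have hz : ∀ j, j ≠ (0 : Fin 3) → g j = 0 := by
        intro j hj
        rcases trich j with rfl | rfl | rfl
        · exact absurd rfl hj
        · exact hzero_of_card _ h1
        · exact hzero_of_card _ h2
      obtain ⟨h', hmem, heq⟩ := key 0 h0 hz
      exact ⟨h', hmem, heq⟩
    · have hz : ∀ j, j ≠ (1 : Fin 3) → g j = 0 := by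
        intro j hj
        rcases trich j with rfl | rfl | rfl
        · exact hzero_of_card _ h0
        · exact absurd rfl hj
        · exact hzero_of_card _ h2
      obtain ⟨h', hmem, heq⟩ := key 1 h1 hz
      exact ⟨h', hmem, heq⟩
    · have hz : ∀ j, j ≠ (2 : Fin 3) → g j = 0 := by
        intro j hj
        rcases trich j with rfl | rfl | rfl
        · exact hzero_of_card _ h0
        · exact hzero_of_card _ h1
        · exact absurd rfl hj
      obtain ⟨h', hmem, heq⟩ := key 2 h2 hz
      exact ⟨h', hmem, heq⟩

/-- For all `n ≥ 0`, `OPT(2n) ≡ OPT(n) (mod 4)`. -/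
theorem opt_triple_double_mod_four (n : ℕ) : OPT 3 (2 * n) ≡ OPT 3 n [MOD 4] := by
  rcases Nat.eq_zero_or_pos n with h | h
  · subst h; rw [mul_zero]
  · rw [← ZMod.natCast_eq_natCast_iff]
    rw [OPT_mod4 h, OPT_mod4 (by omega : 1 ≤ 2 * n), ← T1_card n h]
end
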